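/- arXiv:2503.14474 — 6 statements merged into one kernel-verified Lean document; each statement's English description precedes it below -/
import Mathlib

section
/- Let r ≥ 2, let 1 ≤ k ≤ ⌊r/2⌋, let H be an F_{r,k}-hom-free r-uniform hypergraph with at least one edge, and let (X_1,…,X_r) be a random edge with uniform ordering on H with ratio sequence (x_1,…,x_r), so that 0 < x_1 ≤ … ≤ x_r = 1. Then x_i + x_j ≤ x_{i+j} for every i ∈ {1,…,k} and every integer j with i ≤ j ≤ r − i. -/
open Finset

/-- A finite hypergraph: a finite vertex set (of naturals) together with a
finite set of edges, each edge being a subset of the vertex set. -/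
structure NatHypergraph where
  verts : Finset ℕ
  edges : Finset (Finset ℕ)
  edge_sub : ∀ e ∈ edges, e ⊆ verts

namespace NatHypergraph

/-- `H` is `r`-uniform if every edge has exactly `r` vertices. -/
def IsUniform (r : ℕ) (H : NatHypergraph) : Prop := ∀ e ∈ H.edges, e.card = r

/-- `H` contains a copy of `F` (i.e. `F` is a subgraph of `H` after an injective
relabelling of the vertices of `F`). -/
def ContainsCopy (F H : NatHypergraph) : Prop :=
  ∃ f : ℕ → ℕ, Set.InjOn f ↑F.verts ∧ (∀ v ∈ F.verts, f v ∈ H.verts) ∧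
    ∀ e ∈ F.edges, e.image f ∈ H.edges

/-- `H` is `𝓕`-free: it contains no member of `𝓕` as a subgraph. -/
def Free (𝓕 : Set NatHypergraph) (H : NatHypergraph) : Prop := ∀ F ∈ 𝓕, ¬ F.ContainsCopy H

/-- `f` is a homomorphism from `F` to `H`: the image of every edge of `F` is an
edge of `H`. -/
def IsHom (f : ℕ → ℕ) (F H : NatHypergraph) : Prop :=
  (∀ v ∈ F.verts, f v ∈ H.verts) ∧ ∀ e ∈ F.edges, e.image f ∈ H.edges

/-- `H` is `𝓕`-hom-free: no member of `𝓕` admits a homomorphism to `H`. -/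
def HomFree (𝓕 : Set NatHypergraph) (H : NatHypergraph) : Prop :=
  ∀ F ∈ 𝓕, ∀ f : ℕ → ℕ, ¬ IsHom f F H

/-- The degree of a vertex: the number of edges containing it. -/
def degree (H : NatHypergraph) (v : ℕ) : ℕ := (H.edges.filter (fun e => v ∈ e)).card

/-- `H` is `r`-partite: the vertices can be coloured with `r` colours so that every
edge contains exactly one vertex of each colour. -/
def Partite (r : ℕ) (H : NatHypergraph) : Prop :=
  ∃ f : ℕ → Fin r, ∀ e ∈ H.edges, ∀ c : Fin r, (e.filter (fun v => f v = c)).card = 1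

/-- `H` and `G` are isomorphic hypergraphs. -/
def Isomorphic (H G : NatHypergraph) : Prop :=
  ∃ f : ℕ → ℕ, Set.BijOn f ↑H.verts ↑G.verts ∧ H.edges.image (Finset.image f) = G.edges

end NatHypergraph

/-- The Turán number `ex(n, 𝓕)`: the maximum number of edges in an `𝓕`-free
`r`-uniform hypergraph on `n` vertices. -/
noncomputable def exNum (r n : ℕ) (𝓕 : Set NatHypergraph) : ℕ :=
  sSup {m : ℕ | ∃ H : NatHypergraph, H.verts = Finset.range n ∧ H.IsUniform r ∧
    H.Free 𝓕 ∧ H.edges.card = m}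

/-- The Turán density `π(𝓕) = lim_{n → ∞} ex(n, 𝓕) / (n choose r)`. -/
noncomputable def turanDensity (r : ℕ) (𝓕 : Set NatHypergraph) : ℝ :=
  Filter.lim (Filter.map (fun n : ℕ => (exNum r n 𝓕 : ℝ) / (n.choose r : ℝ)) Filter.atTop)

/-- The three edges of the `(r-i,i)`-tent on vertex set `{1, …, 2r-1}`. -/
def tentEdges (r i : ℕ) : Finset (Finset ℕ) :=
  {Finset.Icc 1 r,
   Finset.Icc 1 i ∪ Finset.Icc (r + 1) (2 * r - i - 1) ∪ {2 * r - 1},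
   Finset.Icc (i + 1) r ∪ Finset.Icc (2 * r - i) (2 * r - 1)}

/-- The `(r-i,i)`-tent `Δ_{(r-i,i)}`. -/
def tent (r i : ℕ) : NatHypergraph where
  verts := Finset.Icc 1 (2 * r - 1) ∪ (tentEdges r i).biUnion id
  edges := tentEdges r i
  edge_sub := fun e he =>
    (Finset.subset_biUnion_of_mem id he).trans Finset.subset_union_right

/-- The family `𝓕_{r,k} = {Δ_{(r-i,i)} : 1 ≤ i ≤ k}`. -/
def tentFamily (r k : ℕ) : Set NatHypergraph := {H | ∃ i, 1 ≤ i ∧ i ≤ k ∧ H = tent r i}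

/-- The Lagrangian of a hypergraph: the maximum of `∑_{e ∈ E} ∏_{v ∈ e} w v` over
nonnegative vertex weightings summing to `1`. -/
noncomputable def lagrangian (H : NatHypergraph) : ℝ :=
  sSup {s : ℝ | ∃ w : ℕ → ℝ, (∀ v, 0 ≤ w v) ∧ (∑ v ∈ H.verts, w v) = 1 ∧
    s = ∑ e ∈ H.edges, ∏ v ∈ e, w v}

/-- The blowup density `b(H) = r! · L(H)`. -/
noncomputable def blowupDensity (r : ℕ) (H : NatHypergraph) : ℝ :=
  (r.factorial : ℝ) * lagrangian H

/-- Membership in the set `X_{r,k}`: `0 < x 1 ≤ x 2 ≤ ⋯ ≤ x r = 1`, and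
`x i + x j ≤ x (i+j)` whenever `1 ≤ i ≤ k` and `i ≤ j ≤ r - i`. -/
def memX (r k : ℕ) (x : ℕ → ℝ) : Prop :=
  0 < x 1 ∧ (∀ i, 1 ≤ i → i < r → x i ≤ x (i + 1)) ∧ x r = 1 ∧
    ∀ i j, 1 ≤ i → i ≤ k → i ≤ j → i + j ≤ r → x i + x j ≤ x (i + j)

/-- The interval `[L, R]` is uniform for `x`: `x i = x L + (i - L) * x 1` on it. -/
def UniformIntv (x : ℕ → ℝ) (L R : ℕ) : Prop :=
  ∀ i, L ≤ i → i ≤ R → x i = x L + ((i - L : ℕ) : ℝ) * x 1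

/-- `[L, R]` is a segment: a uniform interval (inside `[0, r]`) that is not properly
contained in any other uniform interval. -/
def IsSegment (r : ℕ) (x : ℕ → ℝ) (L R : ℕ) : Prop :=
  L ≤ R ∧ R ≤ r ∧ UniformIntv x L R ∧
    ∀ L' R', L' ≤ L → R ≤ R' → R' ≤ r → UniformIntv x L' R' → L' = L ∧ R' = R

/-- Shannon entropy (base 2) of a finitely supported distribution `p` on `s`. -/
noncomputable def ent {α : Type*} (s : Finset α) (p : α → ℝ) : ℝ :=
  ∑ a ∈ s, -(p a * Real.logb 2 (p a))

/-- Entropy of the pushforward of `p` along `g` (the entropy of `g(X)`). -/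
noncomputable def pushEnt {α β : Type*} [DecidableEq β] (s : Finset α) (p : α → ℝ)
    (g : α → β) : ℝ :=
  ent (s.image g) (fun b => ∑ a ∈ s.filter (fun a => g a = b), p a)

/-- All tuples in `V(H)^r`. -/
def tupleSpace (r : ℕ) (H : NatHypergraph) : Finset (Fin r → ℕ) :=
  Fintype.piFinset fun _ : Fin r => H.verts

/-- The joint entropy `H(X_1, …, X_r)` of a random tuple with distribution `p`. -/
noncomputable def jointEnt (r : ℕ) (H : NatHypergraph) (p : (Fin r → ℕ) → ℝ) : ℝ :=
  ent (tupleSpace r H) p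

/-- The entropy `H(X_i, X_{i+1}, …, X_r)` of the suffix starting at position `i`
(1-indexed) of a random tuple with distribution `p`. -/
noncomputable def suffixEnt (r : ℕ) (H : NatHypergraph) (p : (Fin r → ℕ) → ℝ) (i : ℕ) : ℝ :=
  pushEnt (tupleSpace r H) p (fun t (j : Fin r) => if i - 1 ≤ (j : ℕ) then t j else 0)

/-- The entropy `H(X_{j+1})` of the single coordinate `j` (0-indexed). -/
noncomputable def coordEnt (r : ℕ) (H : NatHypergraph) (p : (Fin r → ℕ) → ℝ) (j : Fin r) : ℝ :=
  pushEnt (tupleSpace r H) p (fun t => t j)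

/-- `p` is the distribution of a random edge with uniform ordering on `H`:
nonnegative, total mass one, supported on tuples whose value set is an edge, and
exchangeable (invariant under permutations of the coordinates). -/
def IsRandomEdge (r : ℕ) (H : NatHypergraph) (p : (Fin r → ℕ) → ℝ) : Prop :=
  (∀ t, 0 ≤ p t) ∧
  (∑ t ∈ tupleSpace r H, p t = 1) ∧
  (∀ t, p t ≠ 0 → Finset.image t Finset.univ ∈ H.edges) ∧
  (∀ σ : Equiv.Perm (Fin r), ∀ t, p (t ∘ σ) = p t)

/-- Every pair of distinct vertices lies in a common edge. -/
def TwoCovered (H : NatHypergraph) : Prop :=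
  ∀ u ∈ H.verts, ∀ v ∈ H.verts, u ≠ v → ∃ e ∈ H.edges, u ∈ e ∧ v ∈ e

/-- `G` is a blowup of `G0`. -/
def IsBlowup (G0 G : NatHypergraph) : Prop :=
  ∃ B : ℕ → Finset ℕ,
    (∀ v ∈ G0.verts, (B v).Nonempty) ∧
    (∀ u ∈ G0.verts, ∀ v ∈ G0.verts, u ≠ v → Disjoint (B u) (B v)) ∧
    G.verts = G0.verts.biUnion B ∧
    ∀ e : Finset ℕ, e ∈ G.edges ↔
      ∃ e0 ∈ G0.edges, e ⊆ e0.biUnion B ∧ ∀ v ∈ e0, (e ∩ B v).card = 1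

/-- `G` is symmetrised: a blowup of a 2-covered `r`-uniform hypergraph. -/
def Symmetrised (r : ℕ) (G : NatHypergraph) : Prop :=
  ∃ G0 : NatHypergraph, G0.IsUniform r ∧ TwoCovered G0 ∧ IsBlowup G0 G

/-- The family `𝓣_{r,k}` of `r`-uniform hypergraphs with exactly three edges
`A, B, C` such that `A ⊆ B ∪ C`, `(B ∩ C) \ A ≠ ∅` and `|A ∩ B| ≥ r - k`. -/
def TFamily (r k : ℕ) : Set NatHypergraph :=
  {H | H.IsUniform r ∧ ∃ A B C : Finset ℕ,
    H.verts = A ∪ B ∪ C ∧ H.edges = {A, B, C} ∧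
    A ≠ B ∧ A ≠ C ∧ B ≠ C ∧
    A ⊆ B ∪ C ∧ ((B ∩ C) \ A).Nonempty ∧ r - k ≤ (A ∩ B).card}

/-- `H` is `Lset`-intersecting: any two distinct edges intersect in a number of
vertices belonging to `Lset`. -/
def LIntersecting (Lset : Set ℕ) (H : NatHypergraph) : Prop :=
  ∀ e ∈ H.edges, ∀ e' ∈ H.edges, e ≠ e' → (e ∩ e').card ∈ Lset

/-- `H` is a `λ`-tent for the partition `lam = (λ_1, …, λ_m)` of `r`: it has
`m + 1` edges `e 0, e 1, …, e m`, each of size `r`, with `|e 0 ∩ e i| = λ_i`,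
the sets `e 0 ∩ e 1, …, e 0 ∩ e m` partitioning `e 0`, and a vertex `v` with
`e i ∩ e j = {v}` for all `1 ≤ i < j ≤ m`. -/
def IsGeneralTent (r : ℕ) (lam : List ℕ) (H : NatHypergraph) : Prop :=
  ∃ e : ℕ → Finset ℕ,
    H.verts = (Finset.range (lam.length + 1)).biUnion e ∧
    H.edges = (Finset.range (lam.length + 1)).image e ∧
    H.edges.card = lam.length + 1 ∧
    (∀ i ∈ Finset.range (lam.length + 1), (e i).card = r) ∧
    (∀ i, 1 ≤ i → i ≤ lam.length → (e 0 ∩ e i).card = lam.getD (i - 1) 0) ∧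
    e 0 = (Finset.Icc 1 lam.length).biUnion (fun i => e 0 ∩ e i) ∧
    (∀ i j, 1 ≤ i → i < j → j ≤ lam.length → Disjoint (e 0 ∩ e i) (e 0 ∩ e j)) ∧
    (∃ v : ℕ, ∀ i j, 1 ≤ i → i < j → j ≤ lam.length → e i ∩ e j = {v})

/-- The balanced complete `r`-partite `r`-uniform hypergraph `T^r(n)` on the vertex
set `{0, …, n-1}`, with parts given by residues modulo `r`: the edges are exactly
the `r`-subsets whose vertices have pairwise distinct residues mod `r`, i.e. those
meeting each part in exactly one vertex. -/
def turanGraph (r n : ℕ) : NatHypergraph where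
  verts := Finset.range n
  edges := (Finset.powersetCard r (Finset.range n)).filter
    (fun e => ∀ u ∈ e, ∀ v ∈ e, u ≠ v → u % r ≠ v % r)
  edge_sub := by
    intro e he
    simp only [Finset.mem_filter, Finset.mem_powersetCard] at he
    exact he.1.1

/-!
Write `s_l = H(X_l | X_{l+1}, …, X_r)` and `m = i + j`. All coordinates have the same entropy, so
the claim is `2^{s_i} + 2^{s_j} ≤ 2^{s_m}`. Given `X_{l+1}, …, X_r`, the vertex `X_l` lies in their
neighbourhood `N` (the vertices completing them inside an edge). A Jensen argument bounds `2^{s_l}`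
by `2^{s_m}` times the probability that `X'_m ∈ N(X_{l+1}, …, X_r)`, where `X'` is a copy of `X`
conditionally independent of it given `X'_{>m} = X_{>m}`. For `l = j`, exchangeability replaces
`X_{j+1}, …, X_r` by `X_1, …, X_i, X_{m+1}, …, X_r`. A vertex in both neighbourhoods would,
together with the edge `{X_1, …, X_r}`, give a homomorphic image of the tent `Δ_{(r-i,i)}`, so the
two probabilities sum to at most one.
-/

section FiniteProbability

variable {α β γ δ : Type*} [DecidableEq β] [DecidableEq γ] [DecidableEq δ]
  (s : Finset α) (p : α → ℝ)

noncomputable def fiberMass (g : α → β) (b : β) : ℝ := ∑ a ∈ s with g a = b, p a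

noncomputable def condEnt (U : α → γ) (V : α → β) : ℝ :=
  pushEnt s p (fun a => (U a, V a)) - pushEnt s p V

noncomputable def condProb (U : α → γ) (Y : α → β) (B : Finset γ) (y : β) : ℝ :=
  (∑ a ∈ s with Y a = y ∧ U a ∈ B, p a) / fiberMass s p Y y

variable {s p}

lemma pushEnt_eq_sum (g : α → β) :
    pushEnt s p g = -∑ a ∈ s, p a * Real.logb 2 (fiberMass s p g (g a)) := by
  rw [pushEnt, ent, ← Finset.sum_neg_distrib, ← Finset.sum_fiberwise_of_maps_to
    (fun a ha => Finset.mem_image_of_mem g ha)]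
  refine Finset.sum_congr rfl fun b _ => ?_
  have hfib : ∀ a ∈ s.filter (g · = b), -(p a * Real.logb 2 (fiberMass s p g (g a)))
      = -(p a * Real.logb 2 (fiberMass s p g b)) := fun a ha => by
    rw [(Finset.mem_filter.mp ha).2]
  rw [Finset.sum_congr rfl hfib, Finset.sum_neg_distrib, ← Finset.sum_mul]
  rfl

lemma fiberMass_congr {g₁ : α → β} {g₂ : α → γ} {a : α}
    (h : ∀ b ∈ s, g₁ b = g₁ a ↔ g₂ b = g₂ a) : fiberMass s p g₁ (g₁ a) = fiberMass s p g₂ (g₂ a) :=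
  Finset.sum_congr (Finset.filter_congr h) fun _ _ => rfl

lemma pushEnt_congr {g₁ : α → β} {g₂ : α → γ}
    (h : ∀ a ∈ s, ∀ b ∈ s, g₁ b = g₁ a ↔ g₂ b = g₂ a) : pushEnt s p g₁ = pushEnt s p g₂ := by
  simp only [pushEnt_eq_sum]
  congr 1
  exact Finset.sum_congr rfl fun a ha => by rw [fiberMass_congr (h a ha)]

lemma fiberMass_nonneg (h0 : ∀ a ∈ s, 0 ≤ p a) (g : α → β) (b : β) : 0 ≤ fiberMass s p g b :=
  Finset.sum_nonneg fun a ha => h0 a (Finset.mem_filter.mp ha).1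

lemma fiberMass_pos (h0 : ∀ a ∈ s, 0 ≤ p a) (g : α → β) {a : α} (ha : a ∈ s) (hpa : 0 < p a) :
    0 < fiberMass s p g (g a) :=
  hpa.trans_le <| Finset.single_le_sum (fun b hb => h0 b (Finset.mem_filter.mp hb).1)
    (Finset.mem_filter.mpr ⟨ha, rfl⟩)

lemma sum_mul_comp_eq_sum_fiberMass_mul (g : α → β) (F : β → ℝ) :
    ∑ a ∈ s, p a * F (g a) = ∑ b ∈ s.image g, fiberMass s p g b * F b := by
  rw [← Finset.sum_fiberwise_of_maps_to (fun a ha => Finset.mem_image_of_mem g ha)]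
  refine Finset.sum_congr rfl fun b _ => ?_
  rw [fiberMass, Finset.sum_mul]
  exact Finset.sum_congr rfl fun a ha => by rw [(Finset.mem_filter.mp ha).2]

/-- Reweighting each point by the inverse mass of its fibre counts every fibre of positive mass
once. -/
lemma sum_mul_div_fiberMass_le (g : α → β) {F : β → ℝ} {B : Finset β}
    (hF : ∀ b ∈ B, 0 ≤ F b) (hB : ∀ a ∈ s, p a ≠ 0 → g a ∈ B) :
    ∑ a ∈ s, p a * (F (g a) / fiberMass s p g (g a)) ≤ ∑ b ∈ B, F b := by
  rw [sum_mul_comp_eq_sum_fiberMass_mul g (fun b => F b / fiberMass s p g b)]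
  calc ∑ b ∈ s.image g, fiberMass s p g b * (F b / fiberMass s p g b)
      = ∑ b ∈ s.image g with fiberMass s p g b ≠ 0, F b := by
        rw [Finset.sum_filter]
        refine Finset.sum_congr rfl fun b _ => ?_
        split_ifs with h
        · exact mul_div_cancel₀ _ h
        · simp [not_not.mp h]
    _ ≤ ∑ b ∈ B, F b := by
        refine Finset.sum_le_sum_of_subset_of_nonneg (fun b hb => ?_) fun b hb _ => hF b hb
        obtain ⟨a, ha, hpa⟩ := Finset.exists_ne_zero_of_sum_ne_zero (Finset.mem_filter.mp hb).2
        obtain ⟨has, rfl⟩ := Finset.mem_filter.mp ha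
        exact hB a has hpa

lemma condProb_nonneg (h0 : ∀ a ∈ s, 0 ≤ p a) (U : α → γ) (Y : α → β) (B : Finset γ) (y : β) :
    0 ≤ condProb s p U Y B y :=
  div_nonneg (Finset.sum_nonneg fun a ha => h0 a (Finset.mem_filter.mp ha).1)
    (fiberMass_nonneg h0 Y y)

lemma condProb_singleton (U : α → γ) (V : α → β) (a : α) :
    condProb s p U V {U a} (V a) =
      fiberMass s p (fun a => (U a, V a)) (U a, V a) / fiberMass s p V (V a) := by
  rw [condProb, fiberMass]
  congr 1
  refine Finset.sum_congr (Finset.filter_congr fun b _ => ?_) fun _ _ => rfl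
  rw [Finset.mem_singleton, Prod.mk.injEq, and_comm]

lemma condProb_singleton_pos (h0 : ∀ a ∈ s, 0 ≤ p a) (U : α → γ) (V : α → β) {a : α}
    (ha : a ∈ s) (hpa : 0 < p a) : 0 < condProb s p U V {U a} (V a) := by
  rw [condProb_singleton]
  exact div_pos (fiberMass_pos h0 (fun a => (U a, V a)) ha hpa) (fiberMass_pos h0 V ha hpa)

lemma sum_condProb_singleton (U : α → γ) (Y : α → β) (B : Finset γ) (y : β) :
    ∑ u ∈ B, condProb s p U Y {u} y = condProb s p U Y B y := by
  simp only [condProb, ← Finset.sum_div]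
  congr 1
  rw [← Finset.sum_fiberwise_of_maps_to (s := s.filter _) (t := B) (g := U)
    (fun a ha => (Finset.mem_filter.mp ha).2.2)]
  refine Finset.sum_congr rfl fun u hu => Finset.sum_congr ?_ fun _ _ => rfl
  ext a
  simp only [Finset.mem_filter, Finset.mem_singleton]
  constructor
  · rintro ⟨ha, hy, rfl⟩; exact ⟨⟨ha, hy, hu⟩, rfl⟩
  · rintro ⟨⟨ha, hy, -⟩, rfl⟩; exact ⟨ha, hy, rfl⟩

lemma condProb_add_condProb_le_one (h0 : ∀ a ∈ s, 0 ≤ p a) (U : α → γ) (Y : α → β)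
    {B₁ B₂ : Finset γ} (hB : Disjoint B₁ B₂) (y : β) :
    condProb s p U Y B₁ y + condProb s p U Y B₂ y ≤ 1 := by
  classical
  rw [condProb, condProb, ← add_div, ← Finset.sum_union]
  · refine div_le_one_of_le₀ (Finset.sum_le_sum_of_subset_of_nonneg ?_ ?_)
      (fiberMass_nonneg h0 Y y)
    · intro a ha
      simp only [Finset.mem_union, Finset.mem_filter] at ha ⊢
      rcases ha with ⟨ha, hy, -⟩ | ⟨ha, hy, -⟩ <;> exact ⟨ha, hy⟩
    · exact fun a ha _ => h0 a (Finset.mem_filter.mp ha).1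
  · exact Finset.disjoint_filter.mpr fun a _ h1 h2 => Finset.disjoint_left.mp hB h1.2 h2.2

lemma condEnt_eq_sum (h0 : ∀ a ∈ s, 0 ≤ p a) (U : α → γ) (V : α → β) :
    condEnt s p U V = -∑ a ∈ s, p a * Real.logb 2 (condProb s p U V {U a} (V a)) := by
  rw [condEnt, pushEnt_eq_sum, pushEnt_eq_sum, neg_sub_neg, ← Finset.sum_sub_distrib,
    ← Finset.sum_neg_distrib]
  refine Finset.sum_congr rfl fun a ha => ?_
  rcases (h0 a ha).eq_or_lt with hpa | hpa
  · simp [← hpa]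
  rw [condProb_singleton, Real.logb_div (fiberMass_pos h0 (fun a => (U a, V a)) ha hpa).ne'
    (fiberMass_pos h0 V ha hpa).ne']
  ring

lemma condEnt_sub_condEnt_eq_sum (h0 : ∀ a ∈ s, 0 ≤ p a) (U : α → γ) (V : α → β) (Y : α → δ) :
    condEnt s p U V - condEnt s p U Y = ∑ a ∈ s, p a *
      Real.logb 2 (condProb s p U Y {U a} (Y a) / condProb s p U V {U a} (V a)) := by
  rw [condEnt_eq_sum h0, condEnt_eq_sum h0, neg_sub_neg, ← Finset.sum_sub_distrib]
  refine Finset.sum_congr rfl fun a ha => ?_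
  rcases (h0 a ha).eq_or_lt with hpa | hpa
  · simp [← hpa]
  rw [Real.logb_div (condProb_singleton_pos h0 U Y ha hpa).ne'
    (condProb_singleton_pos h0 U V ha hpa).ne', mul_sub]

lemma sum_mul_logb_le_logb_sum_mul (h0 : ∀ a ∈ s, 0 ≤ p a) (h1 : ∑ a ∈ s, p a = 1) {R : α → ℝ}
    (hR : ∀ a ∈ s, p a ≠ 0 → 0 < R a) :
    ∑ a ∈ s, p a * Real.logb 2 (R a) ≤ Real.logb 2 (∑ a ∈ s, p a * R a) := by
  have hlogb : ConcaveOn ℝ (Set.Ioi 0) (Real.logb 2) := by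
    have h : Real.logb 2 = fun x => (Real.log 2)⁻¹ • Real.log x := by
      funext x
      simp [Real.logb, div_eq_inv_mul]
    rw [h]
    exact strictConcaveOn_log_Ioi.concaveOn.smul (inv_nonneg.mpr (Real.log_nonneg one_le_two))
  have hsupp : ∀ F : α → ℝ, ∑ a ∈ s with p a ≠ 0, p a * F a = ∑ a ∈ s, p a * F a := fun F =>
    Finset.sum_filter_of_ne fun a _ h => left_ne_zero_of_mul h
  rw [← hsupp, ← hsupp]
  refine hlogb.le_map_sum (fun a ha => h0 a (Finset.mem_filter.mp ha).1)
    (by rw [Finset.sum_filter_ne_zero, h1]) fun a ha => ?_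
  obtain ⟨has, hpa⟩ := Finset.mem_filter.mp ha
  exact hR a has hpa

lemma sum_mul_condProb_div_condProb_le (h0 : ∀ a ∈ s, 0 ≤ p a) (U : α → γ) (V : α → β)
    (f : β → δ) (A : β → Finset γ) (hA : ∀ a ∈ s, p a ≠ 0 → U a ∈ A (V a)) :
    ∑ a ∈ s, p a * (condProb s p U (f ∘ V) {U a} (f (V a)) / condProb s p U V {U a} (V a)) ≤
      ∑ a ∈ s, p a * condProb s p U (f ∘ V) (A (V a)) (f (V a)) := by
  set G : γ × β → ℝ := fun c => fiberMass s p V c.2 * condProb s p U (f ∘ V) {c.1} (f c.2)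
  set P : Finset (γ × β) := (s.image V).biUnion fun v => A v ×ˢ {v}
  have hP : ∀ c, c ∈ P ↔ c.2 ∈ s.image V ∧ c.1 ∈ A c.2 := fun c => by
    simp only [P, Finset.mem_biUnion, Finset.mem_product, Finset.mem_singleton]
    constructor
    · rintro ⟨v, hv, hu, rfl⟩; exact ⟨hv, hu⟩
    · rintro ⟨hv, hu⟩; exact ⟨c.2, hv, hu, rfl⟩
  calc _ = ∑ a ∈ s, p a * (G (U a, V a) / fiberMass s p (fun a => (U a, V a)) (U a, V a)) := by
        refine Finset.sum_congr rfl fun a _ => ?_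
        rw [condProb_singleton U V, div_div_eq_mul_div]
        ring
    _ ≤ ∑ c ∈ P, G c := sum_mul_div_fiberMass_le (fun a => (U a, V a))
        (fun c _ => mul_nonneg (fiberMass_nonneg h0 _ _) (condProb_nonneg h0 _ _ _ _))
        fun a has hpa => (hP _).mpr ⟨Finset.mem_image_of_mem V has, hA a has hpa⟩
    _ = ∑ v ∈ s.image V, fiberMass s p V v * condProb s p U (f ∘ V) (A v) (f v) := by
        rw [Finset.sum_finset_product_right _ _ _ hP]
        refine Finset.sum_congr rfl fun v _ => ?_
        simp only [G]
        rw [← Finset.mul_sum, sum_condProb_singleton]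
    _ = _ := (sum_mul_comp_eq_sum_fiberMass_mul V _).symm

/-- `H(U | V) - H(U | f V) = E log (P(U | f V) / P(U | V))`; Jensen moves the logarithm outside,
and the remaining sum over pairs `(U, V)` of positive mass is bounded using `U ∈ A V`. -/
lemma rpow_condEnt_le (h0 : ∀ a ∈ s, 0 ≤ p a) (h1 : ∑ a ∈ s, p a = 1) (U : α → γ) (V : α → β)
    (f : β → δ) (A : β → Finset γ) (hA : ∀ a ∈ s, p a ≠ 0 → U a ∈ A (V a)) :
    (2 : ℝ) ^ condEnt s p U V ≤ (2 : ℝ) ^ condEnt s p U (f ∘ V) *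
      ∑ a ∈ s, p a * condProb s p U (f ∘ V) (A (V a)) (f (V a)) := by
  set R : α → ℝ := fun a => condProb s p U (f ∘ V) {U a} (f (V a)) / condProb s p U V {U a} (V a)
  set E := ∑ a ∈ s, p a * condProb s p U (f ∘ V) (A (V a)) (f (V a))
  have hRpos : ∀ a ∈ s, p a ≠ 0 → 0 < R a := fun a ha hpa =>
    div_pos (condProb_singleton_pos h0 U (f ∘ V) ha ((h0 a ha).lt_of_ne' hpa))
      (condProb_singleton_pos h0 U V ha ((h0 a ha).lt_of_ne' hpa))
  have hMpos : 0 < ∑ a ∈ s, p a * R a := by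
    obtain ⟨a, ha, hpa⟩ := Finset.exists_ne_zero_of_sum_ne_zero (h1 ▸ one_ne_zero)
    exact Finset.sum_pos' (fun b hb => mul_nonneg (h0 b hb) (div_nonneg
      (condProb_nonneg h0 _ _ _ _) (condProb_nonneg h0 _ _ _ _)))
      ⟨a, ha, mul_pos ((h0 a ha).lt_of_ne' hpa) (hRpos a ha hpa)⟩
  have hME : ∑ a ∈ s, p a * R a ≤ E := sum_mul_condProb_div_condProb_le h0 U V f A hA
  have hdiff : condEnt s p U V - condEnt s p U (f ∘ V) ≤ Real.logb 2 E :=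
    (condEnt_sub_condEnt_eq_sum h0 U V (f ∘ V)).trans_le <|
      (sum_mul_logb_le_logb_sum_mul h0 h1 hRpos).trans
        (Real.logb_le_logb_of_le one_lt_two hMpos hME)
  calc (2 : ℝ) ^ condEnt s p U V
      ≤ (2 : ℝ) ^ (condEnt s p U (f ∘ V) + Real.logb 2 E) :=
        Real.rpow_le_rpow_of_exponent_le one_le_two (by linarith)
    _ = (2 : ℝ) ^ condEnt s p U (f ∘ V) * E := by
        rw [Real.rpow_add two_pos, Real.rpow_logb two_pos (by norm_num) (hMpos.trans_le hME)]

end FiniteProbability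

section Invariance

variable {α β γ : Type*} [DecidableEq β] [DecidableEq γ] {s : Finset α} {p : α → ℝ}
  {τ : α ≃ α} (hs : ∀ a, a ∈ s ↔ τ a ∈ s) (hp : ∀ a, p (τ a) = p a)
include hs hp

lemma sum_mul_comp_equiv (F : α → ℝ) : ∑ a ∈ s, p a * F (τ a) = ∑ a ∈ s, p a * F a :=
  Finset.sum_equiv τ hs fun a _ => by rw [hp]

lemma sum_filter_comp_equiv (P : α → Prop) [DecidablePred P] :
    ∑ a ∈ s with P (τ a), p a = ∑ a ∈ s with P a, p a := by
  simpa only [Finset.sum_filter, mul_ite, mul_one, mul_zero, ite_mul] using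
    sum_mul_comp_equiv hs hp fun a => if P a then (1 : ℝ) else 0

lemma fiberMass_comp_equiv (g : α → β) (b : β) : fiberMass s p (g ∘ τ) b = fiberMass s p g b :=
  sum_filter_comp_equiv hs hp (g · = b)

lemma pushEnt_comp_equiv (g : α → β) : pushEnt s p (g ∘ τ) = pushEnt s p g := by
  simp only [pushEnt_eq_sum, fiberMass_comp_equiv hs hp]
  exact congrArg Neg.neg (sum_mul_comp_equiv hs hp fun a => Real.logb 2 (fiberMass s p g (g a)))

lemma condEnt_comp_equiv (U : α → γ) (V : α → β) :
    condEnt s p (U ∘ τ) (V ∘ τ) = condEnt s p U V := by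
  rw [condEnt, condEnt, ← pushEnt_comp_equiv hs hp V,
    ← pushEnt_comp_equiv hs hp (fun a => (U a, V a))]
  rfl

lemma condProb_comp_equiv (U : α → γ) (Y : α → β) (B : Finset γ) (y : β) :
    condProb s p (U ∘ τ) (Y ∘ τ) B y = condProb s p U Y B y := by
  rw [condProb, condProb, fiberMass_comp_equiv hs hp]
  congr 1
  exact sum_filter_comp_equiv hs hp fun a => Y a = y ∧ U a ∈ B

end Invariance

lemma Finset.exists_image_eq_of_card_eq {α β : Type*} [DecidableEq β] [Nonempty β]
    {I : Finset α} {T : Finset β} (h : I.card = T.card) : ∃ g : α → β, I.image g = T := by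
  obtain ⟨g, hg⟩ := I.finite_toSet.exists_bijOn_of_encard_eq (t := (T : Set β))
    (by simp only [Set.encard_coe_eq_coe_finsetCard, h])
  exact ⟨g, Finset.coe_injective (by simpa using hg.image_eq)⟩

lemma exists_tent_labelling {r i u : ℕ} (hi : 1 ≤ i) (hir : i < r) {S T B C : Finset ℕ}
    (hS : S.card = i) (hT : T.card = r - i) (hB : B.card = r - i - 1) (hC : C.card = i - 1) :
    ∃ f : ℕ → ℕ, (∀ v, f v ∈ S ∨ f v ∈ T ∨ f v ∈ B ∨ f v ∈ C ∨ f v = u) ∧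
      (Finset.Icc 1 i).image f = S ∧ (Finset.Icc (i + 1) r).image f = T ∧
      (Finset.Icc (r + 1) (2 * r - i - 1)).image f = B ∧
      (Finset.Icc (2 * r - i) (2 * r - 2)).image f = C ∧ f (2 * r - 1) = u := by
  obtain ⟨g₁, hg₁⟩ := Finset.exists_image_eq_of_card_eq (I := Finset.Icc 1 i) (T := S)
    (by simp [hS])
  obtain ⟨g₂, hg₂⟩ := Finset.exists_image_eq_of_card_eq (I := Finset.Icc (i + 1) r) (T := T)
    (by simp [hT])
  obtain ⟨g₃, hg₃⟩ := Finset.exists_image_eq_of_card_eq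
    (I := Finset.Icc (r + 1) (2 * r - i - 1)) (T := B) (by simp [hB]; omega)
  obtain ⟨g₄, hg₄⟩ := Finset.exists_image_eq_of_card_eq
    (I := Finset.Icc (2 * r - i) (2 * r - 2)) (T := C) (by simp [hC]; omega)
  set f : ℕ → ℕ := fun v =>
    if v ∈ Finset.Icc 1 i then g₁ v else if v ∈ Finset.Icc (i + 1) r then g₂ v
    else if v ∈ Finset.Icc (r + 1) (2 * r - i - 1) then g₃ v
    else if v ∈ Finset.Icc (2 * r - i) (2 * r - 2) then g₄ v else u
  have hf : ∀ v, (v ∈ Finset.Icc 1 i → f v = g₁ v) ∧ (v ∈ Finset.Icc (i + 1) r → f v = g₂ v) ∧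
      (v ∈ Finset.Icc (r + 1) (2 * r - i - 1) → f v = g₃ v) ∧
      (v ∈ Finset.Icc (2 * r - i) (2 * r - 2) → f v = g₄ v) := by
    intro v
    simp only [f, Finset.mem_Icc]
    refine ⟨?_, ?_, ?_, ?_⟩ <;> intro hv <;> split_ifs <;> first | rfl | (exfalso; omega)
  refine ⟨f, fun v => ?_, hg₁ ▸ Finset.image_congr fun v hv => (hf v).1 (Finset.mem_coe.mp hv),
    hg₂ ▸ Finset.image_congr fun v hv => (hf v).2.1 (Finset.mem_coe.mp hv),
    hg₃ ▸ Finset.image_congr fun v hv => (hf v).2.2.1 (Finset.mem_coe.mp hv),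
    hg₄ ▸ Finset.image_congr fun v hv => (hf v).2.2.2 (Finset.mem_coe.mp hv), ?_⟩
  · simp only [f]
    split_ifs with h₁ h₂ h₃ h₄
    exacts [Or.inl (hg₁ ▸ Finset.mem_image_of_mem g₁ h₁),
      Or.inr (Or.inl (hg₂ ▸ Finset.mem_image_of_mem g₂ h₂)),
      Or.inr (Or.inr (Or.inl (hg₃ ▸ Finset.mem_image_of_mem g₃ h₃))),
      Or.inr (Or.inr (Or.inr (Or.inl (hg₄ ▸ Finset.mem_image_of_mem g₄ h₄)))),
      Or.inr (Or.inr (Or.inr (Or.inr rfl)))]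
  · simp only [f, Finset.mem_Icc]
    split_ifs <;> first | rfl | (exfalso; omega)

namespace NatHypergraph

variable {H : NatHypergraph} {r : ℕ}

def nbhd (H : NatHypergraph) (S : Finset ℕ) : Finset ℕ :=
  (H.edges.filter (S ⊆ ·)).biUnion (· \ S)

@[simp]
lemma mem_nbhd {S : Finset ℕ} {v : ℕ} : v ∈ H.nbhd S ↔ v ∉ S ∧ ∃ e ∈ H.edges, S ⊆ e ∧ v ∈ e := by
  simp only [nbhd, Finset.mem_biUnion, Finset.mem_filter, Finset.mem_sdiff]
  constructor
  · rintro ⟨e, ⟨he, hSe⟩, hve, hvS⟩; exact ⟨hvS, e, he, hSe, hve⟩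
  · rintro ⟨hvS, e, he, hSe, hve⟩; exact ⟨e, ⟨he, hSe⟩, hve, hvS⟩

lemma nbhd_anti {S Q : Finset ℕ} (h : S ⊆ Q) : H.nbhd Q ⊆ H.nbhd S := by
  intro v
  simp only [mem_nbhd]
  rintro ⟨hvQ, e, he, hQe, hve⟩
  exact ⟨fun hvS => hvQ (h hvS), e, he, h.trans hQe, hve⟩

/-- The edges `{1..r}`, `{1..i} ∪ {r+1..2r-i-1} ∪ {2r-1}`, `{i+1..r} ∪ {2r-i..2r-1}` of the tent
go to `A`, `B`, `C`, with `i = |S|` and the apex `2r-1` going to `u`. -/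
theorem exists_isHom_tent (hunif : H.IsUniform r) {A B C S : Finset ℕ} {u : ℕ}
    (hA : A ∈ H.edges) (hB : B ∈ H.edges) (hC : C ∈ H.edges) (hSA : S ⊆ A) (hSB : S ⊆ B)
    (hAC : A \ S ⊆ C) (huB : u ∈ B) (huC : u ∈ C) (huA : u ∉ A) :
    ∃ f, IsHom f (tent r S.card) H := by
  set i := S.card
  set T := A \ S
  have huS : u ∉ S := fun h => huA (hSA h)
  have huT : u ∉ T := fun h => huA (Finset.mem_sdiff.mp h).1
  have hT : T.card = r - i := by rw [Finset.card_sdiff_of_subset hSA, hunif A hA]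
  have huSB : insert u S ⊆ B := Finset.insert_subset huB hSB
  have huTC : insert u T ⊆ C := Finset.insert_subset huC hAC
  have hcardB := Finset.card_le_card huSB
  have hcardC := Finset.card_le_card huTC
  rw [Finset.card_insert_of_notMem huS, hunif B hB] at hcardB
  rw [Finset.card_insert_of_notMem huT, hunif C hC, hT] at hcardC
  have hB' : (B \ insert u S).card = r - i - 1 := by
    rw [Finset.card_sdiff_of_subset huSB, hunif B hB, Finset.card_insert_of_notMem huS]; omega
  have hC' : (C \ insert u T).card = i - 1 := by
    rw [Finset.card_sdiff_of_subset huTC, hunif C hC, Finset.card_insert_of_notMem huT, hT]; omega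
  obtain ⟨f, hf, h₁, h₂, h₃, h₄, hapex⟩ :=
    exists_tent_labelling (u := u) (by omega) (by omega) rfl hT hB' hC'
  refine ⟨f, fun v _ => ?_, fun e he => ?_⟩
  · rcases hf v with h | h | h | h | h
    · exact H.edge_sub A hA (hSA h)
    · exact H.edge_sub A hA (Finset.sdiff_subset h)
    · exact H.edge_sub B hB (Finset.sdiff_subset h)
    · exact H.edge_sub C hC (Finset.sdiff_subset h)
    · exact H.edge_sub B hB (h ▸ huB)
  simp only [tent, tentEdges, Finset.mem_insert, Finset.mem_singleton] at he
  rcases he with rfl | rfl | rfl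
  · rw [show Finset.Icc 1 r = Finset.Icc 1 i ∪ Finset.Icc (i + 1) r by ext; simp; omega,
      Finset.image_union, h₁, h₂, Finset.union_sdiff_of_subset hSA]
    exact hA
  · rw [Finset.image_union, Finset.image_union, h₁, h₃, Finset.image_singleton, hapex]
    convert hB using 1
    ext x
    simp only [Finset.mem_union, Finset.mem_sdiff, Finset.mem_insert, Finset.mem_singleton]
    have := @hSB x
    rcases eq_or_ne x u with rfl | hxu
    · simp [huB]
    · tauto
  · rw [show Finset.Icc (2 * r - i) (2 * r - 1) = Finset.Icc (2 * r - i) (2 * r - 2) ∪ {2 * r - 1}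
        by ext; simp; omega,
      Finset.image_union, Finset.image_union, h₂, h₄, Finset.image_singleton, hapex]
    convert hC using 1
    ext x
    simp only [Finset.mem_union, Finset.mem_sdiff, Finset.mem_insert, Finset.mem_singleton]
    have := @hAC x
    rcases eq_or_ne x u with rfl | hxu
    · simp [huC]
    · tauto

theorem disjoint_nbhd_sdiff_nbhd {k : ℕ} (hunif : H.IsUniform r)
    (hfree : H.HomFree (tentFamily r k)) {A S : Finset ℕ} (hA : A ∈ H.edges) (hSA : S ⊆ A)
    (hS : 1 ≤ S.card) (hSk : S.card ≤ k) : Disjoint (H.nbhd (A \ S)) (H.nbhd S) := by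
  refine Finset.disjoint_left.mpr fun u hu₁ hu₂ => ?_
  obtain ⟨huAS, C, hC, hAC, huC⟩ := mem_nbhd.mp hu₁
  obtain ⟨huS, B, hB, hSB, huB⟩ := mem_nbhd.mp hu₂
  have huA : u ∉ A := fun hu => huAS (Finset.mem_sdiff.mpr ⟨hu, huS⟩)
  obtain ⟨f, hf⟩ := exists_isHom_tent hunif hA hB hC hSA hSB hAC huB huC huA
  exact hfree _ ⟨S.card, hS, hSk, rfl⟩ f hf

end NatHypergraph

section RandomEdge

variable {r : ℕ} {H : NatHypergraph} {p : (Fin r → ℕ) → ℝ}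

def maskTo (M : Finset (Fin r)) (t : Fin r → ℕ) : Fin r → ℕ := fun a => if a ∈ M then t a else 0

/-- The positions `i, i+1, …, r-1`; in the `1`-indexed notation of `suffixEnt` these carry
`X_{i+1}, …, X_r`. -/
def tail (i : ℕ) : Finset (Fin r) := Finset.univ.filter (i ≤ ·)

lemma card_compl_tail {i : ℕ} (hi : i ≤ r) : ((tail i)ᶜ : Finset (Fin r)).card = i := by
  rw [tail, Finset.compl_filter]
  simpa [not_le, hi] using Fin.card_filter_val_lt (n := r) (m := i)

lemma maskTo_eq_maskTo_iff {M : Finset (Fin r)} {t t' : Fin r → ℕ} :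
    maskTo M t = maskTo M t' ↔ ∀ a ∈ M, t a = t' a := by
  simp only [maskTo, funext_iff]
  refine ⟨fun h a ha => by simpa [ha] using h a, fun h a => ?_⟩
  split_ifs with ha
  exacts [h a ha, rfl]

lemma maskTo_maskTo {C M : Finset (Fin r)} (h : C ⊆ M) (t : Fin r → ℕ) :
    maskTo C (maskTo M t) = maskTo C t := by
  funext a
  by_cases ha : a ∈ C
  · simp [maskTo, ha, h ha]
  · simp [maskTo, ha]

lemma maskTo_comp_perm {M : Finset (Fin r)} {σ : Equiv.Perm (Fin r)} (hσ : ∀ a ∈ M, σ a = a)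
    (t : Fin r → ℕ) : maskTo M (t ∘ σ) = maskTo M t := by
  funext a
  by_cases ha : a ∈ M <;> simp [maskTo, ha, hσ a]

lemma image_maskTo (M : Finset (Fin r)) (t : Fin r → ℕ) : M.image (maskTo M t) = M.image t :=
  Finset.image_congr fun a ha => by simp [maskTo, Finset.mem_coe.mp ha]

lemma suffixEnt_succ (i : ℕ) :
    suffixEnt r H p (i + 1) = pushEnt (tupleSpace r H) p (maskTo (tail i)) := by
  unfold suffixEnt
  congr 1
  funext t j
  simp [maskTo, tail]

lemma suffixEnt_sub_suffixEnt_succ (a : Fin r) {l : ℕ} (hl : (a : ℕ) + 1 = l) :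
    suffixEnt r H p l - suffixEnt r H p (l + 1) =
      condEnt (tupleSpace r H) p (fun t => t a) (maskTo (tail l)) := by
  subst hl
  rw [suffixEnt_succ, suffixEnt_succ, condEnt]
  congr 1
  refine pushEnt_congr fun t _ t' _ => ?_
  simp only [Prod.mk.injEq, maskTo_eq_maskTo_iff, tail, Finset.mem_filter, Finset.mem_univ,
    true_and]
  constructor
  · intro h
    exact ⟨h a le_rfl, fun b hb => h b (by omega)⟩
  · rintro ⟨ha, h⟩ b hb
    rcases (Nat.lt_or_eq_of_le hb) with hb | hb
    · exact h b hb
    · rwa [Fin.ext hb.symm]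

def blockSwap (r i j : ℕ) (hij : i ≤ j) (hr : i + j ≤ r) : Equiv.Perm (Fin r) :=
  Function.Involutive.toPerm
    (fun c => ⟨if c < i then c + j else if j ≤ c ∧ c < i + j then c - j else c, by
      split_ifs <;> omega⟩)
    (fun c => by ext; simp only; split_ifs <;> omega)

lemma blockSwap_apply_val {i j : ℕ} (hij : i ≤ j) (hr : i + j ≤ r) (c : Fin r) :
    (blockSwap r i j hij hr c : ℕ) =
      if c < i then c + j else if j ≤ c ∧ c < i + j then c - j else c :=
  rfl

lemma blockSwap_of_mem_tail {i j : ℕ} (hij : i ≤ j) (hr : i + j ≤ r) :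
    ∀ c ∈ tail (i + j), blockSwap r i j hij hr c = c := by
  intro c hc
  simp only [tail, Finset.mem_filter, Finset.mem_univ, true_and] at hc
  ext
  rw [blockSwap_apply_val]
  split_ifs <;> omega

lemma image_tail_blockSwap {i j : ℕ} (hij : i ≤ j) (hr : i + j ≤ r) :
    (tail j).image (blockSwap r i j hij hr) = (tail i)ᶜ ∪ tail (i + j) := by
  ext c
  simp only [Finset.mem_image, Finset.mem_union, Finset.mem_compl, tail, Finset.mem_filter,
    Finset.mem_univ, true_and, not_le]
  constructor
  · rintro ⟨d, hd, rfl⟩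
    rw [blockSwap_apply_val]
    split_ifs <;> omega
  · intro hc
    refine ⟨blockSwap r i j hij hr c, ?_, Function.Involutive.toPerm_involutive _ c⟩
    rw [blockSwap_apply_val]
    split_ifs <;> omega

def permTuple (σ : Equiv.Perm (Fin r)) : (Fin r → ℕ) ≃ (Fin r → ℕ) :=
  σ.symm.arrowCongr (Equiv.refl ℕ)

lemma permTuple_apply (σ : Equiv.Perm (Fin r)) (t : Fin r → ℕ) : permTuple σ t = t ∘ σ := rfl

lemma mem_tupleSpace_iff_permTuple (σ : Equiv.Perm (Fin r)) (t : Fin r → ℕ) :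
    t ∈ tupleSpace r H ↔ permTuple σ t ∈ tupleSpace r H := by
  simp only [tupleSpace, Fintype.mem_piFinset, permTuple_apply, Function.comp_apply]
  exact σ.forall_congr_right.symm

lemma maskTo_comp_permTuple_swap {a b : Fin r} {C : Finset (Fin r)} (ha : a ∉ C) (hb : b ∉ C) :
    maskTo C ∘ permTuple (Equiv.swap a b) = maskTo C :=
  funext <| maskTo_comp_perm fun _ hc =>
    Equiv.swap_apply_of_ne_of_ne (ne_of_mem_of_not_mem hc ha) (ne_of_mem_of_not_mem hc hb)

lemma coord_comp_permTuple_swap (a b : Fin r) :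
    (fun t : Fin r → ℕ => t b) ∘ permTuple (Equiv.swap a b) = fun t => t a := by
  funext t
  simp [permTuple_apply]

/-- `P(X'_b ∈ N(X_M))`, for a copy `X'` of `X` conditionally independent of `X` given
`X'_C = X_C`. -/
noncomputable def nbhdProb (H : NatHypergraph) (p : (Fin r → ℕ) → ℝ) (b : Fin r)
    (C M : Finset (Fin r)) : ℝ :=
  ∑ t ∈ tupleSpace r H, p t *
    condProb (tupleSpace r H) p (fun t => t b) (maskTo C) (H.nbhd (M.image t)) (maskTo C t)

namespace IsRandomEdge

variable (hp : IsRandomEdge r H p)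
include hp

lemma nonneg (t : Fin r → ℕ) : 0 ≤ p t := hp.1 t

lemma sum_eq_one : ∑ t ∈ tupleSpace r H, p t = 1 := hp.2.1

lemma image_mem_edges {t : Fin r → ℕ} (ht : p t ≠ 0) : Finset.univ.image t ∈ H.edges :=
  hp.2.2.1 t ht

lemma comp_perm (σ : Equiv.Perm (Fin r)) (t : Fin r → ℕ) : p (t ∘ σ) = p t := hp.2.2.2 σ t

lemma sum_mul_comp_perm (σ : Equiv.Perm (Fin r)) (F : (Fin r → ℕ) → ℝ) :
    ∑ t ∈ tupleSpace r H, p t * F (t ∘ σ) = ∑ t ∈ tupleSpace r H, p t * F t :=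
  sum_mul_comp_equiv (mem_tupleSpace_iff_permTuple σ) (hp.comp_perm σ) F

lemma coordEnt_eq (a b : Fin r) : coordEnt r H p a = coordEnt r H p b := by
  rw [coordEnt, coordEnt, ← coord_comp_permTuple_swap a b]
  exact pushEnt_comp_equiv (mem_tupleSpace_iff_permTuple _) (hp.comp_perm _) _

lemma condEnt_swap {a b : Fin r} {C : Finset (Fin r)} (ha : a ∉ C) (hb : b ∉ C) :
    condEnt (tupleSpace r H) p (fun t => t a) (maskTo C) =
      condEnt (tupleSpace r H) p (fun t => t b) (maskTo C) := by
  conv_lhs => rw [← coord_comp_permTuple_swap a b, ← maskTo_comp_permTuple_swap ha hb]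
  exact condEnt_comp_equiv (mem_tupleSpace_iff_permTuple _) (hp.comp_perm _) _ _

lemma condProb_swap {a b : Fin r} {C : Finset (Fin r)} (ha : a ∉ C) (hb : b ∉ C)
    (B : Finset ℕ) (y : Fin r → ℕ) :
    condProb (tupleSpace r H) p (fun t => t a) (maskTo C) B y =
      condProb (tupleSpace r H) p (fun t => t b) (maskTo C) B y := by
  conv_lhs => rw [← coord_comp_permTuple_swap a b, ← maskTo_comp_permTuple_swap ha hb]
  exact condProb_comp_equiv (mem_tupleSpace_iff_permTuple _) (hp.comp_perm _) _ _ _ _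

lemma injective_of_ne_zero (hunif : H.IsUniform r) {t : Fin r → ℕ} (ht : p t ≠ 0) :
    Function.Injective t := by
  have h : (Finset.univ.image t).card = (Finset.univ : Finset (Fin r)).card := by
    rw [hunif _ (hp.image_mem_edges ht), Finset.card_univ, Fintype.card_fin]
  simpa using Finset.injOn_of_card_image_eq h

lemma rpow_condEnt_le_nbhdProb (hunif : H.IsUniform r) {a b : Fin r} {M C : Finset (Fin r)}
    (haM : a ∉ M) (hCM : C ⊆ M) (hbC : b ∉ C) :
    (2 : ℝ) ^ condEnt (tupleSpace r H) p (fun t => t a) (maskTo M) ≤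
      (2 : ℝ) ^ condEnt (tupleSpace r H) p (fun t => t b) (maskTo C) * nbhdProb H p b C M := by
  have haC : a ∉ C := fun h => haM (hCM h)
  have hA : ∀ t ∈ tupleSpace r H, p t ≠ 0 → t a ∈ H.nbhd (M.image (maskTo M t)) := by
    intro t _ ht
    rw [image_maskTo, NatHypergraph.mem_nbhd]
    refine ⟨fun h => ?_, _, hp.image_mem_edges ht, Finset.image_subset_image (Finset.subset_univ M),
      Finset.mem_image_of_mem t (Finset.mem_univ a)⟩
    obtain ⟨c, hc, hca⟩ := Finset.mem_image.mp h
    exact haM (hp.injective_of_ne_zero hunif ht hca ▸ hc)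
  have h := rpow_condEnt_le (fun t _ => hp.nonneg t) hp.sum_eq_one (fun t => t a) (maskTo M)
    (maskTo C) (fun v => H.nbhd (M.image v)) hA
  simp only [show maskTo C ∘ maskTo M = maskTo C from funext (maskTo_maskTo hCM), image_maskTo,
    maskTo_maskTo hCM, hp.condEnt_swap haC hbC, hp.condProb_swap haC hbC] at h
  exact h

lemma rpow_suffixEnt_le (hunif : H.IsUniform r) {l m : ℕ} (hl : 1 ≤ l) (hlm : l < m) (b : Fin r)
    (hb : (b : ℕ) + 1 = m) :
    (2 : ℝ) ^ (suffixEnt r H p l - suffixEnt r H p (l + 1)) ≤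
      (2 : ℝ) ^ (suffixEnt r H p m - suffixEnt r H p (m + 1)) *
        nbhdProb H p b (tail m) (tail l) := by
  rw [suffixEnt_sub_suffixEnt_succ (⟨l - 1, by omega⟩ : Fin r) (Nat.sub_add_cancel hl),
    suffixEnt_sub_suffixEnt_succ b hb]
  refine hp.rpow_condEnt_le_nbhdProb hunif (by simp [tail]; omega) (fun c hc => ?_)
    (by simp [tail]; omega)
  simp only [tail, Finset.mem_filter, Finset.mem_univ, true_and] at hc ⊢
  omega

lemma nbhdProb_image_perm {σ : Equiv.Perm (Fin r)} {C : Finset (Fin r)} (hσ : ∀ c ∈ C, σ c = c)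
    (b : Fin r) (M : Finset (Fin r)) : nbhdProb H p b C (M.image σ) = nbhdProb H p b C M := by
  refine Eq.trans ?_ (hp.sum_mul_comp_perm σ _)
  refine Finset.sum_congr rfl fun t _ => ?_
  rw [Finset.image_image, maskTo_comp_perm hσ]

lemma disjoint_nbhd_image_tail {k i : ℕ} (hunif : H.IsUniform r)
    (hfree : H.HomFree (tentFamily r k)) (hi : 1 ≤ i) (hik : i ≤ k) (hir : i ≤ r)
    {t : Fin r → ℕ} (ht : p t ≠ 0) {Q : Finset (Fin r)} (hQ : (tail i)ᶜ ⊆ Q) :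
    Disjoint (H.nbhd ((tail i).image t)) (H.nbhd (Q.image t)) := by
  have hS : ((tail i)ᶜ.image t).card = i := by
    rw [Finset.card_image_of_injective _ (hp.injective_of_ne_zero hunif ht), card_compl_tail hir]
  refine (NatHypergraph.disjoint_nbhd_sdiff_nbhd hunif hfree (hp.image_mem_edges ht)
    (Finset.image_subset_image (Finset.subset_univ _)) (by omega) (by omega)).mono
    (NatHypergraph.nbhd_anti ?_) (NatHypergraph.nbhd_anti (Finset.image_subset_image hQ))
  intro v hv
  obtain ⟨hvA, hvS⟩ := Finset.mem_sdiff.mp hv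
  obtain ⟨c, -, rfl⟩ := Finset.mem_image.mp hvA
  exact Finset.mem_image_of_mem t (by_contra fun hc => hvS (Finset.mem_image_of_mem t
    (Finset.mem_compl.mpr hc)))

lemma nbhdProb_tail_add_le_one {k i : ℕ} (hunif : H.IsUniform r)
    (hfree : H.HomFree (tentFamily r k)) (hi : 1 ≤ i) (hik : i ≤ k) (hir : i ≤ r) (b : Fin r)
    (C : Finset (Fin r)) {Q : Finset (Fin r)} (hQ : (tail i)ᶜ ⊆ Q) :
    nbhdProb H p b C (tail i) + nbhdProb H p b C Q ≤ 1 := by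
  rw [nbhdProb, nbhdProb, ← hp.sum_eq_one, ← Finset.sum_add_distrib]
  refine Finset.sum_le_sum fun t _ => ?_
  rw [← mul_add]
  rcases eq_or_ne (p t) 0 with ht | ht
  · simp [ht]
  · exact mul_le_of_le_one_right (hp.nonneg t) (condProb_add_condProb_le_one
      (fun t _ => hp.nonneg t) _ _ (hp.disjoint_nbhd_image_tail hunif hfree hi hik hir ht hQ) _)

theorem rpow_add_rpow_le {k i j : ℕ} (hunif : H.IsUniform r) (hfree : H.HomFree (tentFamily r k))
    (hi : 1 ≤ i) (hik : i ≤ k) (hij : i ≤ j) (hr : i + j ≤ r) :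
    (2 : ℝ) ^ (suffixEnt r H p i - suffixEnt r H p (i + 1)) +
        (2 : ℝ) ^ (suffixEnt r H p j - suffixEnt r H p (j + 1)) ≤
      (2 : ℝ) ^ (suffixEnt r H p (i + j) - suffixEnt r H p (i + j + 1)) := by
  set b : Fin r := ⟨i + j - 1, by omega⟩
  have hb : (b : ℕ) + 1 = i + j := by simp only [b]; omega
  have hI := hp.rpow_suffixEnt_le hunif (l := i) hi (by omega) b hb
  have hJ := hp.rpow_suffixEnt_le hunif (l := j) (by omega) (by omega) b hb
  rw [← hp.nbhdProb_image_perm (blockSwap_of_mem_tail hij hr), image_tail_blockSwap] at hJ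
  have hsum := hp.nbhdProb_tail_add_le_one hunif hfree hi hik (by omega) b (tail (i + j))
    (Finset.subset_union_left (s₂ := tail (i + j)))
  calc _ ≤ _ := add_le_add hI hJ
    _ = _ := (mul_add _ _ _).symm
    _ ≤ _ := mul_le_of_le_one_right (by positivity) hsum

end IsRandomEdge

end RandomEdge

theorem ratio_seq_superadditive_general (r k : ℕ)
    (H : NatHypergraph) (hunif : H.IsUniform r)
    (hfree : H.HomFree (tentFamily r k))
    (p : (Fin r → ℕ) → ℝ) (hp : IsRandomEdge r H p)
    (x : ℕ → ℝ)
    (hx : ∀ i, 1 ≤ i → i ≤ r → ∀ h : i - 1 < r,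
      x i = (2 : ℝ) ^ (suffixEnt r H p i - suffixEnt r H p (i + 1)
        - coordEnt r H p ⟨i - 1, h⟩)) :
    ∀ i j, 1 ≤ i → i ≤ k → i ≤ j → i + j ≤ r → x i + x j ≤ x (i + j) := by
  intro i j hi hik hij hr
  have hcoord : ∀ l (hl : l - 1 < r),
      coordEnt r H p ⟨l - 1, hl⟩ = coordEnt r H p ⟨i + j - 1, by omega⟩ :=
    fun _ _ => hp.coordEnt_eq _ _
  rw [hx i hi (by omega) (by omega), hx j (by omega) (by omega) (by omega),
    hx (i + j) (by omega) hr (by omega), hcoord, hcoord j]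
  set c := coordEnt r H p ⟨i + j - 1, by omega⟩
  rw [Real.rpow_sub two_pos _ c, Real.rpow_sub two_pos _ c, Real.rpow_sub two_pos _ c, ← add_div]
  exact div_le_div_of_nonneg_right (hp.rpow_add_rpow_le hunif hfree hi hik hij hr)
    (Real.rpow_pos_of_pos two_pos _).le

/-- **Lemma 2.12 (key entropy inequality).** Let `2 ≤ r`, `1 ≤ k ≤ ⌊r/2⌋`, let `H` be an
`𝓕_{r,k}`-hom-free `r`-uniform hypergraph with at least one edge, and let `p` be (the
distribution of) a random edge with uniform ordering on `H`, with ratio sequence `x`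
(so `x i = 2^{H(X_i ∣ X_{i+1}, …, X_r) − H(X_i)}`). Then `x i + x j ≤ x (i+j)` for all
`1 ≤ i ≤ k` and `i ≤ j ≤ r − i`. -/
theorem ratio_seq_superadditive (r k : ℕ) (hr : 2 ≤ r) (hk1 : 1 ≤ k) (hk2 : k ≤ r / 2)
    (H : NatHypergraph) (hunif : H.IsUniform r) (hne : H.edges.Nonempty)
    (hfree : H.HomFree (tentFamily r k))
    (p : (Fin r → ℕ) → ℝ) (hp : IsRandomEdge r H p)
    (x : ℕ → ℝ)
    (hx : ∀ i, 1 ≤ i → i ≤ r → ∀ h : i - 1 < r,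
      x i = (2 : ℝ) ^ (suffixEnt r H p i - suffixEnt r H p (i + 1)
        - coordEnt r H p ⟨i - 1, h⟩)) :
    ∀ i j, 1 ≤ i → i ≤ k → i ≤ j → i + j ≤ r → x i + x j ≤ x (i + j) :=
  ratio_seq_superadditive_general r k H hunif hfree p hp x hx
end

section
/- Let r ≥ 2 and 1 ≤ k ≤ ⌊r/2⌋. If (x_1,…,x_r) ∈ X_{r,k} maximizes ∏_{i=1}^r x_i over X_{r,k}, then x_j + x_{r−j} = 1 for every j ∈ {1,…,k}. -/
open Finset

/-! Strong induction on `j`. If `x i + x (r - i) = 1` for all `i < j` but `x j + x (r - j) < 1`,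
then `x (r - j)` can be raised towards `1 - x j` without leaving `X_{r,k}`: its constraints read
`x i + x (r - j) ≤ x (r - j + i) = 1 - x (j - i)`, and `x i + x (j - i) ≤ x j`. Raising it
strictly increases the product, contradicting maximality. -/

open Function

theorem prod_lt_prod_update {ι R : Type*} [DecidableEq ι] [CommSemiring R] [PartialOrder R]
    [IsStrictOrderedRing R] {s : Finset ι} {f : ι → R} {m : ι} {c : R} (hm : m ∈ s)
    (hpos : ∀ i ∈ s, 0 < f i) (hc : f m < c) :
    ∏ i ∈ s, f i < ∏ i ∈ s, update f m c i := by
  rw [prod_update_of_mem hm, ← mul_prod_erase s f hm, sdiff_singleton_eq_erase]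
  exact mul_lt_mul_of_pos_right hc (prod_pos fun i hi => hpos i (mem_of_mem_erase hi))

namespace memX

variable {r k : ℕ} {x : ℕ → ℝ}

theorem monotoneOn (hx : memX r k x) : MonotoneOn x (Set.Icc 1 r) :=
  monotoneOn_of_le_add_one Set.ordConnected_Icc fun i _ hi hi' =>
    hx.2.1 i hi.1 (Nat.lt_of_succ_le hi'.2)

theorem pos (hx : memX r k x) {i : ℕ} (hi : 1 ≤ i) (hir : i ≤ r) : 0 < x i :=
  hx.1.trans_le <| hx.monotoneOn ⟨le_rfl, hi.trans hir⟩ ⟨hi, hir⟩ hi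

theorem add_le (hx : memX r k x) {a b : ℕ} (ha : 1 ≤ a) (hb : 1 ≤ b) (hk : min a b ≤ k)
    (hr : a + b ≤ r) : x a + x b ≤ x (a + b) := by
  rcases le_total a b with hab | hba
  · exact hx.2.2.2 a b ha (by omega) hab hr
  · rw [add_comm (x a), add_comm a]
    exact hx.2.2.2 b a hb (by omega) hba (by omega)

theorem add_sub_le_one (hx : memX r k x) {j : ℕ} (hj : 1 ≤ j) (hjk : j ≤ k) (hjr : j < r) :
    x j + x (r - j) ≤ 1 := by
  have h := hx.add_le hj (by omega : 1 ≤ r - j) (by omega) (by omega)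
  rwa [Nat.add_sub_cancel' hjr.le, hx.2.2.1] at h

theorem add_one_sub_le (hx : memX r k x) {i j : ℕ} (hi : 1 ≤ i) (hij : i ≤ j) (hjk : j ≤ k)
    (h2k : 2 * k ≤ r) (hsymm : ∀ l, 1 ≤ l → l < j → x l + x (r - l) = 1) :
    x i + (1 - x j) ≤ x (r - j + i) := by
  rcases hij.eq_or_lt with rfl | hij
  · rw [Nat.sub_add_cancel (by omega), hx.2.2.1]
    linarith
  · have hsum := hx.add_le hi (by omega : 1 ≤ j - i) (by omega) (by omega)
    rw [Nat.add_sub_cancel' hij.le] at hsum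
    have h := hsymm (j - i) (by omega) (by omega)
    rw [show r - (j - i) = r - j + i by omega] at h
    linarith

end memX

theorem memX_update {r k m : ℕ} {x : ℕ → ℝ} {c : ℝ} (hx : memX r k x) (hm : m < r)
    (hc : x m ≤ c) (hc' : c ≤ x (m + 1))
    (hcons : ∀ i l, 1 ≤ i → i ≤ k → i ≤ l → i + l ≤ r → (i = m ∨ l = m) →
      update x m c i + update x m c l ≤ update x m c (i + l)) :
    memX r k (update x m c) := by
  obtain ⟨hpos, hmono, hxr, hadd⟩ := hx
  have hle : ∀ i, x i ≤ update x m c i := fun i => by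
    rcases eq_or_ne i m with rfl | h
    · simpa
    · simp [h]
  refine ⟨hpos.trans_le (hle 1), fun i hi hir => ?_, by simp [hm.ne', hxr],
    fun i l hi hik hil hilr => ?_⟩
  · rcases eq_or_ne i m with rfl | h
    · simpa [Nat.succ_ne_self] using hc'
    · simpa [h] using (hmono i hi hir).trans (hle (i + 1))
  · by_cases him : i = m ∨ l = m
    · exact hcons i l hi hik hil hilr him
    · push Not at him
      simpa [him.1, him.2] using (hadd i l hi hik hil hilr).trans (hle (i + l))

/-- The new value of `x (r - j)` is the midpoint of `x (r - j)` and `1 - x j`; when `r = 2 j`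
it is `1 / 2`, so that `x j + x j ≤ x r` survives. -/
theorem memX.exists_prod_lt {r k j : ℕ} {x : ℕ → ℝ} (hx : memX r k x) (h2k : 2 * k ≤ r)
    (hj : 1 ≤ j) (hjk : j ≤ k) (hsymm : ∀ l, 1 ≤ l → l < j → x l + x (r - l) = 1)
    (hlt : x j + x (r - j) < 1) :
    ∃ y, memX r k y ∧ ∏ i ∈ Icc 1 r, x i < ∏ i ∈ Icc 1 r, y i := by
  set c := (x (r - j) + (1 - x j)) / 2 with hc
  have hxc : x (r - j) < c := by linarith
  have hc1 : c < 1 - x j := by linarith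
  refine ⟨update x (r - j) c, memX_update hx (by omega) hxc.le ?_ ?_, ?_⟩
  · have := hx.add_one_sub_le le_rfl hj hjk h2k hsymm
    linarith [hx.1]
  · intro i l hi hik hil hilr him
    obtain rfl : l = r - j := by omega
    rcases (show i ≤ j by omega).eq_or_lt with hij | hij
    · rw [hij, Nat.add_sub_cancel' (by omega), update_of_ne (show r ≠ r - j by omega),
        hx.2.2.1, update_self, update_apply]
      split_ifs with h
      · rw [← h] at hc
        linarith
      · linarith
    · rw [update_of_ne (by omega), update_self, update_of_ne (by omega), add_comm i]
      linarith [hx.add_one_sub_le hi hij.le hjk h2k hsymm]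
  · exact prod_lt_prod_update (mem_Icc.2 ⟨by omega, by omega⟩)
      (fun i hi => hx.pos (mem_Icc.1 hi).1 (mem_Icc.1 hi).2) hxc

theorem maximizer_symmetry_general (r k : ℕ) (hk2 : k ≤ r / 2)
    (x : ℕ → ℝ) (hx : memX r k x)
    (hmax : ∀ y : ℕ → ℝ, memX r k y →
      ∏ i ∈ Finset.Icc 1 r, y i ≤ ∏ i ∈ Finset.Icc 1 r, x i) :
    ∀ j, 1 ≤ j → j ≤ k → x j + x (r - j) = 1 := by
  have h2k : 2 * k ≤ r := by omega
  intro j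
  induction j using Nat.strong_induction_on with
  | _ j ih =>
    intro hj hjk
    refine (hx.add_sub_le_one hj hjk (by omega)).antisymm (not_lt.1 fun hlt => ?_)
    obtain ⟨y, hy, hxy⟩ :=
      hx.exists_prod_lt h2k hj hjk (fun l hl hlj => ih l hlj hl (by omega)) hlt
    exact (hmax y hy).not_gt hxy

/-- **Lemma 3.2 (symmetry of maximisers).** If `(x_1, …, x_r) ∈ X_{r,k}` maximises
`∏_{i=1}^r x_i` over `X_{r,k}`, then `x_j + x_{r-j} = 1` for every `j ∈ {1, …, k}`. -/
theorem maximizer_symmetry (r k : ℕ) (hr : 2 ≤ r) (hk1 : 1 ≤ k) (hk2 : k ≤ r / 2)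
    (x : ℕ → ℝ) (hx : memX r k x)
    (hmax : ∀ y : ℕ → ℝ, memX r k y →
      ∏ i ∈ Finset.Icc 1 r, y i ≤ ∏ i ∈ Finset.Icc 1 r, x i) :
    ∀ j, 1 ≤ j → j ≤ k → x j + x (r - j) = 1 :=
  maximizer_symmetry_general r k hk2 x hx hmax
end

section
/- Let r ≥ 2, let 1 ≤ k ≤ ⌊r/2⌋, let (x_1,…,x_r) ∈ X_{r,k}, set x_0 = 0, assume x_i + x_{r−i} = 1 for all i ∈ {1,…,k}, and assume the initial segment [0,I] satisfies I ≤ k − 1. Then for all 0 ≤ L ≤ R ≤ r: (i) if R ≤ k − 1, then [L,R] is a segment if and only if [r−R, r−L] is a segment, and if R ≤ k, then [L,R] is a super segment if and only if [r−R, r−L] is a super segment; (ii) if [L,R] is a segment with L ≤ k and R ≥ r − k (i.e. it is both left-crossing and right-crossing), then L = r − R; (iii) if [L,R] is a left-crossing but not right-crossing segment, then r − L is the right endpoint of the segment containing r − k, and if [L,R] is a right-crossing but not left-crossing segment, then r − R is the left endpoint of the segment containing k. -/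
open Finset

/-!
A uniform interval is a run of unit steps `x (i + 1) = x i + x 1`, and a segment is a maximal
run. Since `x i + x (r - i) = 1` for `i ≤ k`, the step at `i` is a unit step exactly when the step
at `r - i - 1` is, so runs and their ends below `k` reflect to runs and ends above `r - k`.
The initial segment `[0, I]` gives `x (I + 1) > (I + 1) x 1`, and superadditivity then bounds
the length of every uniform interval by `I + 1`. Hence super segments are exactly the uniform
intervals of length `I + 1`, which is why their symmetry reaches one step further, to `R = k`.
-/

def UnitStep (x : ℕ → ℝ) (i : ℕ) : Prop := x (i + 1) = x i + x 1

def IsLeftEnd (x : ℕ → ℝ) (L : ℕ) : Prop := L = 0 ∨ ¬ UnitStep x (L - 1)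

def IsRightEnd (r : ℕ) (x : ℕ → ℝ) (R : ℕ) : Prop := R = r ∨ ¬ UnitStep x R

def IsSuperSegment (r : ℕ) (x : ℕ → ℝ) (I L R : ℕ) : Prop := IsSegment r x L R ∧ R = L + I

section Uniform

variable {r : ℕ} {x : ℕ → ℝ} {L R : ℕ}

theorem uniformIntv_iff_forall_unitStep :
    UniformIntv x L R ↔ ∀ i, L ≤ i → i < R → UnitStep x i := by
  constructor
  · intro hu i hLi hiR
    have hi := hu i hLi hiR.le
    have hi1 := hu (i + 1) (by omega) hiR
    rw [show i + 1 - L = (i - L) + 1 by omega] at hi1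
    rw [UnitStep, hi1, hi]
    push_cast
    ring
  · intro hstep
    have key : ∀ n, L + n ≤ R → x (L + n) = x L + (n : ℝ) * x 1 := by
      intro n
      induction n with
      | zero => simp
      | succ m ih =>
        intro hm
        rw [← add_assoc, hstep (L + m) (by omega) (by omega), ih (by omega)]
        push_cast
        ring
    intro i hLi hiR
    simpa [Nat.add_sub_cancel' hLi] using key (i - L) (by omega)

theorem uniformIntv_succ_iff {i : ℕ} : UniformIntv x i (i + 1) ↔ UnitStep x i := by
  simp only [uniformIntv_iff_forall_unitStep]
  exact ⟨fun h => h i le_rfl (by omega), fun h j hj hj' => by rwa [show j = i by omega]⟩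

theorem UniformIntv.mono {L' R' : ℕ} (hu : UniformIntv x L R) (hL : L ≤ L') (hR : R' ≤ R) :
    UniformIntv x L' R' := by
  rw [uniformIntv_iff_forall_unitStep] at hu ⊢
  exact fun i hi hi' => hu i (by omega) (by omega)

theorem UniformIntv.trans {M : ℕ} (hLM : UniformIntv x L M) (hMR : UniformIntv x M R) :
    UniformIntv x L R := by
  rw [uniformIntv_iff_forall_unitStep] at hLM hMR ⊢
  intro i hi hi'
  rcases Nat.lt_or_ge i M with h | h
  · exact hLM i hi h
  · exact hMR i h hi'

theorem IsLeftEnd.le_of_uniformIntv {a : ℕ} (ha : IsLeftEnd x a) (hu : UniformIntv x L R)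
    (haR : a ≤ R) : a ≤ L := by
  by_contra! h
  rcases ha with ha | ha
  · omega
  · exact ha (uniformIntv_iff_forall_unitStep.1 hu (a - 1) (by omega) (by omega))

theorem IsRightEnd.le_of_uniformIntv {b : ℕ} (hb : IsRightEnd r x b) (hu : UniformIntv x L R)
    (hRr : R ≤ r) (hLb : L ≤ b) : R ≤ b := by
  by_contra! h
  rcases hb with hb | hb
  · omega
  · exact hb (uniformIntv_iff_forall_unitStep.1 hu b hLb h)

theorem isSegment_iff :
    IsSegment r x L R ↔
      L ≤ R ∧ R ≤ r ∧ UniformIntv x L R ∧ IsLeftEnd x L ∧ IsRightEnd r x R := by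
  constructor
  · rintro ⟨hLR, hRr, hu, hmax⟩
    refine ⟨hLR, hRr, hu, ?_, ?_⟩
    · refine or_iff_not_imp_left.2 fun hL hstep => ?_
      have hext : UniformIntv x (L - 1) R :=
        (uniformIntv_succ_iff.2 hstep).trans (by rwa [Nat.sub_add_cancel (by omega)])
      have := hmax (L - 1) R (by omega) le_rfl hRr hext
      omega
    · refine or_iff_not_imp_left.2 fun hR hstep => ?_
      have := hmax L (R + 1) le_rfl (by omega) (by omega)
        (hu.trans (uniformIntv_succ_iff.2 hstep))
      omega
  · rintro ⟨hLR, hRr, hu, hL, hR⟩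
    refine ⟨hLR, hRr, hu, fun L' R' hL' hR' hR'r hu' => ⟨?_, ?_⟩⟩
    · exact le_antisymm hL' (hL.le_of_uniformIntv hu' (by omega))
    · exact le_antisymm (hR.le_of_uniformIntv hu' hR'r (by omega)) hR'

theorem UniformIntv.exists_isSegment (hu : UniformIntv x L R) (hLR : L ≤ R) (hRr : R ≤ r) :
    ∃ L' R', L' ≤ L ∧ R ≤ R' ∧ IsSegment r x L' R' := by
  classical
  have hleft : ∃ a, UniformIntv x a R := ⟨L, hu⟩
  set L' := Nat.find hleft
  have hL'L : L' ≤ L := Nat.find_min' hleft hu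
  set R' := Nat.findGreatest (fun b => UniformIntv x L' b) r
  have huL' : UniformIntv x L' R := Nat.find_spec hleft
  have hRR' : R ≤ R' := Nat.le_findGreatest hRr huL'
  refine ⟨L', R', hL'L, hRR', by omega, Nat.findGreatest_le r, Nat.findGreatest_spec hRr huL', ?_⟩
  intro L'' R'' hL'' hR'' hR''r hu''
  exact ⟨le_antisymm hL'' (Nat.find_min' hleft (hu''.mono le_rfl (by omega))),
    le_antisymm (Nat.le_findGreatest hR''r (hu''.mono hL'' le_rfl)) hR''⟩

theorem UniformIntv.exists_isSegment_of_isRightEnd (hu : UniformIntv x L R) (hLR : L ≤ R)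
    (hRr : R ≤ r) (hR : IsRightEnd r x R) : ∃ L' ≤ L, IsSegment r x L' R := by
  obtain ⟨L', R', hL', hR', hs⟩ := hu.exists_isSegment hLR hRr
  have hR'R := hR.le_of_uniformIntv hs.2.2.1 hs.2.1 (by omega)
  exact ⟨L', hL', by rwa [le_antisymm hR'R hR'] at hs⟩

theorem UniformIntv.exists_isSegment_of_isLeftEnd (hu : UniformIntv x L R) (hLR : L ≤ R)
    (hRr : R ≤ r) (hL : IsLeftEnd x L) : ∃ R' ≥ R, IsSegment r x L R' := by
  obtain ⟨L', R', hL', hR', hs⟩ := hu.exists_isSegment hLR hRr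
  have hLL' := hL.le_of_uniformIntv hs.2.2.1 (by omega)
  exact ⟨R', hR', by rwa [le_antisymm hL' hLL'] at hs⟩

end Uniform

section LengthBound

variable {r k : ℕ} {x : ℕ → ℝ}

theorem memX.add_le_s9 (hx : memX r k x) (h0 : x 0 = 0) {a b : ℕ} (hab : min a b ≤ k)
    (hr : a + b ≤ r) : x a + x b ≤ x (a + b) := by
  rcases Nat.eq_zero_or_pos a with rfl | ha
  · simp [h0]
  rcases Nat.eq_zero_or_pos b with rfl | hb
  · simp [h0]
  rcases le_total a b with h | h
  · exact hx.2.2.2 a b ha (by omega) h hr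
  · simpa [add_comm] using hx.2.2.2 b a hb (by omega) h (by omega)

theorem memX.succ_mul_lt_of_isSegment_zero (hx : memX r k x) (h0 : x 0 = 0) (hk : 1 ≤ k)
    {I : ℕ} (hI : IsSegment r x 0 I) (hIr : I < r) :
    (I + 1) * x 1 < x (I + 1) := by
  have hxI : x I = I * x 1 := by simpa [h0] using hI.2.2.1 I (Nat.zero_le I) le_rfl
  have hnot : ¬ UnitStep x I := by
    rcases (isSegment_iff.1 hI).2.2.2.2 with h | h
    · omega
    · exact h
  have hle : x I + x 1 ≤ x (I + 1) := hx.add_le_s9 h0 (by omega) (by omega)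
  rw [UnitStep] at hnot
  exact lt_of_le_of_ne (by linarith) (fun h => hnot (by linarith))

variable (hx : memX r k x) (h0 : x 0 = 0) {I : ℕ} (hIk : I + 1 ≤ k)
  (hgap : (I + 1) * x 1 < x (I + 1))
include hx h0 hIk hgap

theorem memX.le_add_of_uniformIntv {a b : ℕ} (hu : UniformIntv x a b) (hbr : b ≤ r) :
    b ≤ a + I := by
  by_contra! h
  have hval := hu (a + (I + 1)) (by omega) (by omega)
  rw [Nat.add_sub_cancel_left] at hval
  have := hx.add_le_s9 h0 (a := a) (b := I + 1) (by omega) (by omega)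
  push_cast at hval
  linarith

theorem memX.isSuperSegment_iff {L R : ℕ} :
    IsSuperSegment r x I L R ↔ R = L + I ∧ R ≤ r ∧ UniformIntv x L R := by
  constructor
  · rintro ⟨hs, rfl⟩
    exact ⟨rfl, hs.2.1, hs.2.2.1⟩
  · rintro ⟨rfl, hr, hu⟩
    refine ⟨isSegment_iff.2 ⟨by omega, hr, hu, ?_, ?_⟩, rfl⟩
    · refine or_iff_not_imp_left.2 fun hL hstep => ?_
      have hext : UniformIntv x (L - 1) (L + I) :=
        (uniformIntv_succ_iff.2 hstep).trans (by rwa [Nat.sub_add_cancel (by omega)])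
      have := hx.le_add_of_uniformIntv h0 hIk hgap hext hr
      omega
    · refine or_iff_not_imp_left.2 fun hR hstep => ?_
      have := hx.le_add_of_uniformIntv h0 hIk hgap (hu.trans (uniformIntv_succ_iff.2 hstep))
        (by omega)
      omega

end LengthBound

section Reflection

variable {r k : ℕ} {x : ℕ → ℝ} (hrefl : ∀ i ≤ k, x i + x (r - i) = 1) (hkr : k ≤ r)
include hrefl hkr

theorem unitStep_reflect {i : ℕ} (hi : i + 1 ≤ k) :
    UnitStep x (r - (i + 1)) ↔ UnitStep x i := by
  have h1 := hrefl i (by omega)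
  have h2 := hrefl (i + 1) hi
  rw [UnitStep, UnitStep, show r - (i + 1) + 1 = r - i by omega]
  constructor <;> intro h <;> linarith

theorem uniformIntv_reflect {L R : ℕ} (hR : R ≤ k) :
    UniformIntv x (r - R) (r - L) ↔ UniformIntv x L R := by
  simp only [uniformIntv_iff_forall_unitStep]
  constructor
  · intro h i hi hi'
    exact (unitStep_reflect hrefl hkr (by omega)).1 (h _ (by omega) (by omega))
  · intro h j hj hj'
    have := (unitStep_reflect hrefl hkr (i := r - (j + 1)) (by omega)).2
      (h _ (by omega) (by omega))
    rwa [show r - (r - (j + 1) + 1) = j by omega] at this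

theorem isRightEnd_reflect {L : ℕ} (hL : L ≤ k) : IsRightEnd r x (r - L) ↔ IsLeftEnd x L := by
  rcases Nat.eq_zero_or_pos L with rfl | hL0
  · simp [IsRightEnd, IsLeftEnd]
  have := unitStep_reflect hrefl hkr (i := L - 1) (by omega)
  rw [Nat.sub_add_cancel hL0] at this
  have hL' : r - L ≠ r := by omega
  simp only [IsRightEnd, IsLeftEnd, hL', hL0.ne', false_or, this]

theorem isLeftEnd_reflect {R : ℕ} (hR : R < k) : IsLeftEnd x (r - R) ↔ IsRightEnd r x R := by
  have := unitStep_reflect hrefl hkr (i := R) hR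
  have hR' : r - R ≠ 0 := by omega
  have hRr : R ≠ r := by omega
  simp only [IsRightEnd, IsLeftEnd, show r - R - 1 = r - (R + 1) by omega, this, hR', hRr,
    false_or]

theorem isSegment_reflect {L R : ℕ} (hLR : L ≤ R) (hR : R < k) :
    IsSegment r x (r - R) (r - L) ↔ IsSegment r x L R := by
  rw [isSegment_iff, isSegment_iff, uniformIntv_reflect hrefl hkr hR.le,
    isLeftEnd_reflect hrefl hkr hR, isRightEnd_reflect hrefl hkr (by omega)]
  constructor
  · exact fun ⟨_, _, hu, hl, hr⟩ => ⟨hLR, by omega, hu, hr, hl⟩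
  · exact fun ⟨_, _, hu, hr, hl⟩ => ⟨by omega, by omega, hu, hl, hr⟩

theorem isLeftEnd_sub_of_isRightEnd {R : ℕ} (hRr : R ≤ r) (hRk : r - k ≤ R)
    (hR : IsRightEnd r x R) : IsLeftEnd x (r - R) :=
  (isRightEnd_reflect hrefl hkr (by omega)).1 (by rwa [Nat.sub_sub_self hRr])

theorem memX.isSuperSegment_reflect (hx : memX r k x) (h0 : x 0 = 0) {I : ℕ} (hIk : I + 1 ≤ k)
    (hgap : (I + 1) * x 1 < x (I + 1)) {L R : ℕ} (hLR : L ≤ R) (hR : R ≤ k) :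
    IsSuperSegment r x I (r - R) (r - L) ↔ IsSuperSegment r x I L R := by
  rw [hx.isSuperSegment_iff h0 hIk hgap, hx.isSuperSegment_iff h0 hIk hgap,
    uniformIntv_reflect hrefl hkr hR]
  constructor <;> rintro ⟨hRL, -, hu⟩ <;> exact ⟨by omega, by omega, hu⟩

theorem IsSegment.exists_isSegment_reflect_left {L R : ℕ} (hs : IsSegment r x L R)
    (hLk : L ≤ k) (hkR : k ≤ R) : ∃ L' ≤ r - k, IsSegment r x L' (r - L) := by
  obtain ⟨hLR, hRr, hu, hL, -⟩ := isSegment_iff.1 hs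
  have hu' : UniformIntv x (r - k) (r - L) :=
    (uniformIntv_reflect hrefl hkr le_rfl).2 (hu.mono le_rfl hkR)
  exact hu'.exists_isSegment_of_isRightEnd (by omega) (by omega)
    ((isRightEnd_reflect hrefl hkr hLk).2 hL)

theorem IsSegment.exists_isSegment_reflect_right {L R : ℕ} (hs : IsSegment r x L R)
    (hLk : L ≤ r - k) (hkR : r - k ≤ R) : ∃ R' ≥ k, IsSegment r x (r - R) R' := by
  obtain ⟨hLR, hRr, hu, -, hR⟩ := isSegment_iff.1 hs
  have hu' : UniformIntv x (r - R) k := by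
    rw [← uniformIntv_reflect hrefl hkr le_rfl, Nat.sub_sub_self hRr]
    exact hu.mono hLk le_rfl
  exact hu'.exists_isSegment_of_isLeftEnd (by omega) hkr
    (isLeftEnd_sub_of_isRightEnd hrefl hkr hRr hkR hR)

end Reflection

theorem IsSegment.eq_sub_of_le_of_sub_le {r k : ℕ} {x : ℕ → ℝ}
    (hrefl : ∀ i ≤ k, x i + x (r - i) = 1) (h2k : 2 * k ≤ r) {L R : ℕ}
    (hs : IsSegment r x L R) (hLk : L ≤ k) (hRk : r - k ≤ R) : L = r - R := by
  obtain ⟨hLR, hRr, hu, hL, hR⟩ := isSegment_iff.1 hs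
  have hRL := ((isRightEnd_reflect hrefl (by omega) hLk).2 hL).le_of_uniformIntv hu hRr
    (by omega)
  have hLR' := (isLeftEnd_sub_of_isRightEnd hrefl (by omega) hRr hRk hR).le_of_uniformIntv hu
    (by omega)
  omega

theorem segment_symmetry_general (r k : ℕ) (hk2 : k ≤ r / 2)
    (x : ℕ → ℝ) (hx : memX r k x) (h0 : x 0 = 0)
    (hsym : ∀ i, 1 ≤ i → i ≤ k → x i + x (r - i) = 1)
    (I : ℕ) (hI : IsSegment r x 0 I) (hIk : I + 1 ≤ k) :
    (∀ L R, L ≤ R → R ≤ r →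
      ((R + 1 ≤ k → (IsSegment r x L R ↔ IsSegment r x (r - R) (r - L))) ∧
       (R ≤ k →
        ((IsSegment r x L R ∧ R = L + I) ↔
          (IsSegment r x (r - R) (r - L) ∧ r - L = (r - R) + I))))) ∧
    (∀ L R, IsSegment r x L R → L ≤ k → r - k ≤ R → L = r - R) ∧
    (∀ L R, IsSegment r x L R → L ≤ k → k + 1 ≤ R → ¬ (L ≤ r - k - 1 ∧ r - k ≤ R) →
      ∃ L', IsSegment r x L' (r - L) ∧ L' ≤ r - k ∧ r - k ≤ r - L) ∧
    (∀ L R, IsSegment r x L R → L ≤ r - k - 1 → r - k ≤ R → ¬ (L ≤ k ∧ k + 1 ≤ R) →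
      ∃ R', IsSegment r x (r - R) R' ∧ r - R ≤ k ∧ k ≤ R') := by
  have hkr : k ≤ r := by omega
  have hrefl : ∀ i ≤ k, x i + x (r - i) = 1 := by
    intro i hi
    rcases Nat.eq_zero_or_pos i with rfl | hi0
    · simp [h0, hx.2.2.1]
    · exact hsym i hi0 hi
  have hgap := hx.succ_mul_lt_of_isSegment_zero h0 (by omega) hI (by omega)
  refine ⟨fun L R hLR _ => ⟨fun hRk => (isSegment_reflect hrefl hkr hLR hRk).symm,
    fun hRk => (hx.isSuperSegment_reflect hrefl hkr h0 hIk hgap hLR hRk).symm⟩,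
    fun L R hs hLk hRk => hs.eq_sub_of_le_of_sub_le hrefl (by omega) hLk hRk, ?_, ?_⟩
  · intro L R hs hLk hkR _
    obtain ⟨L', hL', hs'⟩ := hs.exists_isSegment_reflect_left hrefl hkr hLk (by omega)
    exact ⟨L', hs', hL', by omega⟩
  · intro L R hs hLk hkR _
    obtain ⟨R', hR', hs'⟩ := hs.exists_isSegment_reflect_right hrefl hkr (by omega) hkR
    exact ⟨R', hs', by omega, hR'⟩

/-- **Lemma 3.7 (symmetry of segments).** Let `(x_1, …, x_r) ∈ X_{r,k}` with `x_0 = 0`,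
assume `x_i + x_{r-i} = 1` for `1 ≤ i ≤ k`, and let the initial segment `[0, I]` satisfy
`I ≤ k − 1`. (Here a segment `[L, R]` is *super* if `R = L + I`, i.e. it has length
`I + 1`; it is *left-crossing* if it contains `{k, k+1}` and *right-crossing* if it
contains `{r−k−1, r−k}`.) Then:
(i) for `R ≤ k − 1`, `[L, R]` is a segment iff `[r−R, r−L]` is, and for `R ≤ k`,
`[L, R]` is a super segment iff `[r−R, r−L]` is;
(ii) if a segment `[L, R]` is both left- and right-crossing then `L = r − R`;
(iii) if a segment `[L, R]` is left- but not right-crossing then `r − L` is the right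
endpoint of the segment containing `r − k`, and if it is right- but not left-crossing
then `r − R` is the left endpoint of the segment containing `k`. -/
theorem segment_symmetry (r k : ℕ) (hr : 2 ≤ r) (hk1 : 1 ≤ k) (hk2 : k ≤ r / 2)
    (x : ℕ → ℝ) (hx : memX r k x) (h0 : x 0 = 0)
    (hsym : ∀ i, 1 ≤ i → i ≤ k → x i + x (r - i) = 1)
    (I : ℕ) (hI : IsSegment r x 0 I) (hIk : I + 1 ≤ k) :
    (∀ L R, L ≤ R → R ≤ r →
      ((R + 1 ≤ k → (IsSegment r x L R ↔ IsSegment r x (r - R) (r - L))) ∧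
       (R ≤ k →
        ((IsSegment r x L R ∧ R = L + I) ↔
          (IsSegment r x (r - R) (r - L) ∧ r - L = (r - R) + I))))) ∧
    (∀ L R, IsSegment r x L R → L ≤ k → r - k ≤ R → L = r - R) ∧
    (∀ L R, IsSegment r x L R → L ≤ k → k + 1 ≤ R → ¬ (L ≤ r - k - 1 ∧ r - k ≤ R) →
      ∃ L', IsSegment r x L' (r - L) ∧ L' ≤ r - k ∧ r - k ≤ r - L) ∧
    (∀ L R, IsSegment r x L R → L ≤ r - k - 1 → r - k ≤ R → ¬ (L ≤ k ∧ k + 1 ≤ R) →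
      ∃ R', IsSegment r x (r - R) R' ∧ r - R ≤ k ∧ k ≤ R') :=
  segment_symmetry_general r k hk2 x hx h0 hsym I hI hIk
end

section
/- Let r ≥ 2 and 1 ≤ k ≤ r − 1, let F be a family of λ-tents such that every Δ_λ ∈ F corresponds to a partition λ of r with r > λ_1 ≥ k, and let L ⊆ {0, 1, …, k−1}. Then every L-intersecting r-uniform hypergraph H satisfies |E(H)| ≤ ex(|V(H)|, F) and b(H) ≤ π(F). -/
open Finset

/-
An `L`-intersecting `r`-uniform hypergraph `H` with `L ⊆ {0, …, k-1}` admits no homomorphism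
from a tent `Δ_λ` with `λ₁ ≥ k`. A homomorphism is injective on every edge, so the images of the
base and of the first branch are either two edges of `H` sharing at least `λ₁ ≥ k` vertices, or
equal; in the latter case the apex, which lies on every branch but not on the base, is identified
with a base vertex of one of the branches, contradicting injectivity on that branch.

Hence `H` and all its blowups are `𝓕`-free, which gives `|E(H)| ≤ ex(|V(H)|, 𝓕)`. For a weighting
`w`, the blowup of `H` with parts of sizes `⌊w_v n⌋` has `(1 + o(1)) n^r ∑_e ∏_{v ∈ e} w_v` edges;
comparing with `ex(n, 𝓕)` and letting `n → ∞` gives `b(H) ≤ π(𝓕)`. The limit defining `π(𝓕)`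
exists because `ex(n, 𝓕) / C(n, r)` is nonincreasing: deleting each vertex of an extremal
hypergraph on `n + 1` vertices in turn gives `(n + 1 - r) ex(n + 1, 𝓕) ≤ (n + 1) ex(n, 𝓕)`.
-/

open Filter Topology

namespace NatHypergraph

variable {𝓕 : Set NatHypergraph} {F G H : NatHypergraph} {r : ℕ}

theorem ContainsCopy.trans (hFG : F.ContainsCopy G) (hGH : G.ContainsCopy H) :
    F.ContainsCopy H := by
  obtain ⟨f, hf, hfv, hfe⟩ := hFG
  obtain ⟨g, hg, hgv, hge⟩ := hGH
  refine ⟨g ∘ f, fun x hx y hy hxy => hf hx hy (hg (hfv x hx) (hfv y hy) hxy),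
    fun x hx => hgv _ (hfv x hx), fun e he => ?_⟩
  rw [← image_image]
  exact hge _ (hfe e he)

theorem containsCopy_of_subset (hv : G.verts ⊆ H.verts) (he : G.edges ⊆ H.edges) :
    G.ContainsCopy H :=
  ⟨id, Set.injOn_id _, fun _ hx => hv hx, fun e h => by rw [image_id]; exact he h⟩

theorem Free.anti (hGH : G.ContainsCopy H) (hH : H.Free 𝓕) : G.Free 𝓕 :=
  fun F hF hFG => hH F hF (hFG.trans hGH)

theorem HomFree.free_of_isHom {π : ℕ → ℕ} (hH : H.HomFree 𝓕) (hπ : IsHom π G H) :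
    G.Free 𝓕 := by
  rintro F hF ⟨f, -, hfv, hfe⟩
  refine hH F hF (π ∘ f) ⟨fun x hx => hπ.1 _ (hfv x hx), fun e he => ?_⟩
  rw [← image_image]
  exact hπ.2 _ (hfe e he)

theorem HomFree.free (hH : H.HomFree 𝓕) : H.Free 𝓕 :=
  hH.free_of_isHom ⟨fun _ hv => hv, fun e he => by rwa [image_id']⟩

theorem IsUniform.card_edges_le_choose (hH : H.IsUniform r) :
    H.edges.card ≤ H.verts.card.choose r := by
  rw [← card_powersetCard]
  exact card_le_card fun e he => mem_powersetCard.2 ⟨H.edge_sub e he, hH e he⟩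

def map (φ : ℕ → ℕ) (H : NatHypergraph) : NatHypergraph where
  verts := H.verts.image φ
  edges := H.edges.image (image φ)
  edge_sub := by
    simp only [mem_image, forall_exists_index, and_imp]
    rintro _ e he rfl
    exact image_subset_image (H.edge_sub e he)

section map

variable {φ : ℕ → ℕ} (hφ : Set.InjOn φ H.verts)
include hφ

theorem IsUniform.map (hH : H.IsUniform r) : (H.map φ).IsUniform r := by
  simp only [IsUniform, NatHypergraph.map, mem_image, forall_exists_index, and_imp]
  rintro _ e he rfl
  rw [card_image_of_injOn (hφ.mono (H.edge_sub e he)), hH e he]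

theorem card_edges_map : (H.map φ).edges.card = H.edges.card :=
  card_image_of_injOn fun e he e' he' h => coe_injective <|
    (hφ.image_eq_image_iff (coe_subset.2 (H.edge_sub e he)) (coe_subset.2 (H.edge_sub e' he'))).1
      (by simpa only [coe_image] using congrArg ((↑) : Finset ℕ → Set ℕ) h)

theorem map_containsCopy : (H.map φ).ContainsCopy H := by
  have hsurj : Set.SurjOn φ H.verts (H.verts.image φ) := by
    rw [coe_image]
    exact Set.surjOn_image _ _
  refine ⟨Function.invFunOn φ H.verts, hsurj.rightInvOn_invFunOn.injOn,
    fun y hy => hsurj.mapsTo_invFunOn hy, ?_⟩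
  simp only [NatHypergraph.map, mem_image, forall_exists_index, and_imp]
  rintro _ e he rfl
  rwa [image_image, image_congr (f := Function.invFunOn φ H.verts ∘ φ) (g := id)
    fun x hx => hφ.leftInvOn_invFunOn (H.edge_sub e he hx), image_id]

end map

theorem exists_injOn_image_eq_range (s : Finset ℕ) :
    ∃ φ : ℕ → ℕ, Set.InjOn φ s ∧ s.image φ = range s.card := by
  obtain ⟨φ, hφ⟩ := s.finite_toSet.exists_bijOn_of_encard_eq (t := (range s.card : Set ℕ))
    (by simp only [Set.encard_coe_eq_coe_finsetCard, card_range])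
  exact ⟨φ, hφ.injOn, coe_injective (by rw [coe_image, hφ.image_eq])⟩

theorem bddAbove_exNum_set (r n : ℕ) (𝓕 : Set NatHypergraph) :
    BddAbove {m : ℕ | ∃ H : NatHypergraph, H.verts = range n ∧ H.IsUniform r ∧
      H.Free 𝓕 ∧ H.edges.card = m} := by
  refine ⟨n.choose r, ?_⟩
  rintro _ ⟨H, hv, hu, -, rfl⟩
  simpa only [hv, card_range] using hu.card_edges_le_choose

theorem card_edges_le_exNum (hG : G.IsUniform r) (hfree : G.Free 𝓕) :
    G.edges.card ≤ exNum r G.verts.card 𝓕 := by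
  obtain ⟨φ, hφ, himage⟩ := exists_injOn_image_eq_range G.verts
  rw [← card_edges_map hφ]
  exact le_csSup (bddAbove_exNum_set _ _ _)
    ⟨G.map φ, himage, hG.map hφ, hfree.anti (map_containsCopy hφ), rfl⟩

theorem exists_card_edges_eq_exNum {n : ℕ} (h : exNum r n 𝓕 ≠ 0) :
    ∃ G : NatHypergraph, G.verts = range n ∧ G.IsUniform r ∧ G.Free 𝓕 ∧
      G.edges.card = exNum r n 𝓕 := by
  refine Nat.sSup_mem (Set.nonempty_iff_ne_empty.2 fun hempty => h ?_) (bddAbove_exNum_set _ _ _)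
  rw [exNum, hempty, csSup_empty]; rfl

theorem IsUniform.sum_card_edges_not_mem (hG : G.IsUniform r) :
    ∑ v ∈ G.verts, #{e ∈ G.edges | v ∉ e} = (G.verts.card - r) * G.edges.card := by
  simp_rw [card_filter]
  rw [sum_comm, mul_comm, ← smul_eq_mul, ← sum_const]
  refine sum_congr rfl fun e he => ?_
  rw [← card_filter, filter_not, filter_mem_eq_inter, inter_eq_right.2 (G.edge_sub e he),
    card_sdiff_of_subset (G.edge_sub e he), hG e he]

theorem exNum_succ_mul_le (n : ℕ) :
    (n + 1 - r) * exNum r (n + 1) 𝓕 ≤ (n + 1) * exNum r n 𝓕 := by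
  rcases eq_or_ne (exNum r (n + 1) 𝓕) 0 with h | h
  · simp [h]
  obtain ⟨G, hv, hu, hfree, hcard⟩ := exists_card_edges_eq_exNum h
  have hdel : ∀ v ∈ G.verts, #{e ∈ G.edges | v ∉ e} ≤ exNum r n 𝓕 := by
    intro v hv'
    let G' : NatHypergraph := ⟨G.verts.erase v, {e ∈ G.edges | v ∉ e}, fun e he =>
      subset_erase.2 ⟨G.edge_sub e (mem_filter.1 he).1, (mem_filter.1 he).2⟩⟩
    have := card_edges_le_exNum (G := G') (fun e he => hu e (mem_filter.1 he).1)
      (hfree.anti (containsCopy_of_subset (erase_subset _ _) (filter_subset _ _)))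
    rwa [card_erase_of_mem hv', hv, card_range, add_tsub_cancel_right] at this
  calc (n + 1 - r) * exNum r (n + 1) 𝓕 = ∑ v ∈ G.verts, #{e ∈ G.edges | v ∉ e} := by
        rw [hu.sum_card_edges_not_mem, hv, card_range, hcard]
    _ ≤ ∑ _v ∈ G.verts, exNum r n 𝓕 := sum_le_sum hdel
    _ = (n + 1) * exNum r n 𝓕 := by rw [sum_const, hv, card_range, smul_eq_mul]

theorem antitoneOn_exNum_div_choose :
    AntitoneOn (fun n => (exNum r n 𝓕 : ℝ) / n.choose r) (Set.Ici r) := by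
  refine antitoneOn_nat_Ici_of_succ_le fun n hn => ?_
  rw [div_le_div_iff₀ (by exact_mod_cast Nat.choose_pos (by omega))
    (by exact_mod_cast Nat.choose_pos hn)]
  refine mod_cast Nat.le_of_mul_le_mul_left (?_ : (n + 1 - r) * _ ≤ (n + 1 - r) * _)
    (by omega : 0 < n + 1 - r)
  calc (n + 1 - r) * (exNum r (n + 1) 𝓕 * n.choose r)
      = (n + 1 - r) * exNum r (n + 1) 𝓕 * n.choose r := by ring
    _ ≤ (n + 1) * exNum r n 𝓕 * n.choose r := Nat.mul_le_mul_right _ (exNum_succ_mul_le n)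
    _ = (n + 1 - r) * (exNum r n 𝓕 * (n + 1).choose r) := by
      rw [mul_comm (n + 1), mul_assoc, mul_comm (n + 1), Nat.choose_mul_succ_eq]; ring

theorem tendsto_exNum_div_choose :
    Tendsto (fun n => (exNum r n 𝓕 : ℝ) / n.choose r) atTop (𝓝 (turanDensity r 𝓕)) := by
  have h := Real.tendsto_atTop_csInf_of_antitoneOn_bddBelow_nat_Ici
    (antitoneOn_exNum_div_choose (r := r) (𝓕 := 𝓕))
    ⟨0, by rintro _ ⟨n, -, rfl⟩; positivity⟩
  rwa [turanDensity, ← limUnder, h.limUnder_eq]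

theorem turanDensity_nonneg : 0 ≤ turanDensity r 𝓕 :=
  ge_of_tendsto' tendsto_exNum_div_choose fun _ => by positivity

def transversals (s : ℕ → ℕ) (e : Finset ℕ) : Finset (Finset ℕ) :=
  (Fintype.piFinset fun v : e => range (s v)).image
    fun c => univ.image fun v : e => Nat.pair v (c v)

/-- The blowup of `H` in which each vertex `v` becomes the `s v` vertices `Nat.pair v i`,
`i < s v`. -/
def blowup (H : NatHypergraph) (s : ℕ → ℕ) : NatHypergraph where
  verts := H.verts.biUnion fun v => (range (s v)).image (Nat.pair v)
  edges := H.edges.biUnion (transversals s)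
  edge_sub := by
    intro S hS x hx
    obtain ⟨e, he, hS⟩ := mem_biUnion.1 hS
    obtain ⟨c, hc, rfl⟩ := mem_image.1 hS
    obtain ⟨v, -, rfl⟩ := mem_image.1 hx
    exact mem_biUnion.2
      ⟨v, H.edge_sub e he v.2, mem_image_of_mem _ (Fintype.mem_piFinset.1 hc v)⟩

section transversals

variable {s : ℕ → ℕ} {e S : Finset ℕ}

theorem image_unpair_fst_of_mem_transversals (hS : S ∈ transversals s e) :
    S.image (fun x => x.unpair.1) = e := by
  obtain ⟨c, -, rfl⟩ := mem_image.1 hS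
  ext v
  simp

theorem card_of_mem_transversals (hS : S ∈ transversals s e) : S.card = e.card := by
  obtain ⟨c, -, rfl⟩ := mem_image.1 hS
  rw [card_image_of_injective _ fun u v h => Subtype.ext (Nat.pair_eq_pair.1 h).1, card_univ,
    Fintype.card_coe]

theorem card_transversals : (transversals s e).card = ∏ v ∈ e, s v := by
  rw [transversals, card_image_of_injective, Fintype.card_piFinset]
  · simp only [card_range, prod_coe_sort e s]
  intro c c' h
  replace h : univ.image (fun u : e => Nat.pair u (c u)) =
      univ.image fun u : e => Nat.pair u (c' u) := h
  funext v
  have hv : Nat.pair v (c v) ∈ univ.image fun u : e => Nat.pair u (c' u) := by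
    rw [← h]
    exact mem_image_of_mem _ (mem_univ v)
  obtain ⟨u, -, hu⟩ := mem_image.1 hv
  obtain ⟨huv, hcuv⟩ := Nat.pair_eq_pair.1 hu
  obtain rfl : u = v := Subtype.ext huv
  exact hcuv.symm

end transversals

section blowup

variable {s : ℕ → ℕ}

theorem card_verts_blowup : (H.blowup s).verts.card = ∑ v ∈ H.verts, s v := by
  rw [blowup, card_biUnion]
  · exact sum_congr rfl fun v _ => by
      rw [card_image_of_injective _ fun i j h => (Nat.pair_eq_pair.1 h).2, card_range]
  · intro u _ v _ huv
    simp only [Function.onFun, disjoint_left, mem_image]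
    rintro _ ⟨i, -, rfl⟩ ⟨j, -, h⟩
    exact huv (Nat.pair_eq_pair.1 h).1.symm

theorem card_edges_blowup : (H.blowup s).edges.card = ∑ e ∈ H.edges, ∏ v ∈ e, s v := by
  rw [blowup, card_biUnion]
  · exact sum_congr rfl fun e _ => card_transversals
  · intro e _ e' _ hee'
    exact disjoint_left.2 fun S hS hS' => hee' <|
      (image_unpair_fst_of_mem_transversals hS).symm.trans
        (image_unpair_fst_of_mem_transversals hS')

theorem IsUniform.blowup (hH : H.IsUniform r) : (H.blowup s).IsUniform r := by
  intro S hS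
  obtain ⟨e, he, hS⟩ := mem_biUnion.1 hS
  rw [card_of_mem_transversals hS, hH e he]

theorem isHom_blowup : IsHom (fun x => x.unpair.1) (H.blowup s) H := by
  refine ⟨fun x hx => ?_, fun S hS => ?_⟩
  · obtain ⟨v, hv, i, -, rfl⟩ := by simpa only [blowup, mem_biUnion, mem_image] using hx
    simpa using hv
  · obtain ⟨e, he, hS⟩ := mem_biUnion.1 hS
    rwa [image_unpair_fst_of_mem_transversals hS]

end blowup

theorem HomFree.sum_prod_le_exNum (hH : H.IsUniform r) (hfree : H.HomFree 𝓕) (s : ℕ → ℕ) :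
    ∑ e ∈ H.edges, ∏ v ∈ e, s v ≤ exNum r (∑ v ∈ H.verts, s v) 𝓕 := by
  rw [← card_edges_blowup, ← card_verts_blowup]
  exact card_edges_le_exNum hH.blowup (hfree.free_of_isHom isHom_blowup)

theorem HomFree.sum_prod_le_exNum_of_sum_le (hH : H.IsUniform r) (hfree : H.HomFree 𝓕)
    {v₀ : ℕ} (hv₀ : v₀ ∈ H.verts) {s : ℕ → ℕ} {n : ℕ} (hs : ∑ v ∈ H.verts, s v ≤ n) :
    ∑ e ∈ H.edges, ∏ v ∈ e, s v ≤ exNum r n 𝓕 := by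
  let s' v := s v + if v = v₀ then n - ∑ v ∈ H.verts, s v else 0
  have hs' : ∑ v ∈ H.verts, s' v = n := by
    simp only [s', sum_add_distrib, sum_ite_eq', hv₀, if_true]
    omega
  calc ∑ e ∈ H.edges, ∏ v ∈ e, s v ≤ ∑ e ∈ H.edges, ∏ v ∈ e, s' v :=
        sum_le_sum fun e _ => prod_le_prod' fun v _ => Nat.le_add_right _ _
    _ ≤ exNum r n 𝓕 := hs' ▸ hfree.sum_prod_le_exNum hH s'

theorem _root_.tendsto_pow_div_choose (r : ℕ) :
    Tendsto (fun n : ℕ => (n : ℝ) ^ r / n.choose r) atTop (𝓝 r.factorial) := by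
  have h := (Asymptotics.IsEquivalent.refl (u := fun n : ℕ => (n : ℝ) ^ r) (l := atTop)).div
    (isEquivalent_choose r)
  refine h.symm.tendsto_nhds (tendsto_const_nhds.congr' ?_)
  filter_upwards [eventually_ne_atTop 0] with n hn
  simp only [Pi.div_apply]
  field_simp

theorem IsUniform.tendsto_sum_prod_floor_div_choose (hH : H.IsUniform r) {w : ℕ → ℝ}
    (hw : ∀ v, 0 ≤ w v) :
    Tendsto (fun n : ℕ => ((∑ e ∈ H.edges, ∏ v ∈ e, ⌊w v * n⌋₊ : ℕ) : ℝ) / n.choose r) atTop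
      (𝓝 ((∑ e ∈ H.edges, ∏ v ∈ e, w v) * r.factorial)) := by
  have hfloor (v : ℕ) : Tendsto (fun n : ℕ => (⌊w v * n⌋₊ : ℝ) / n) atTop (𝓝 (w v)) :=
    (tendsto_nat_floor_mul_div_atTop (hw v)).comp tendsto_natCast_atTop_atTop
  refine ((tendsto_finsetSum _ fun e _ => tendsto_finsetProd _ fun v _ => hfloor v).mul
    (tendsto_pow_div_choose r)).congr' ?_
  filter_upwards [eventually_ne_atTop 0] with n hn
  rw [Nat.cast_sum, sum_mul, sum_div]
  refine sum_congr rfl fun e he => ?_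
  rw [Nat.cast_prod, prod_div_distrib, prod_const, hH e he,
    div_mul_div_cancel₀ (pow_ne_zero _ (Nat.cast_ne_zero.2 hn))]

theorem HomFree.factorial_mul_sum_prod_le_turanDensity (hH : H.IsUniform r)
    (hfree : H.HomFree 𝓕) {w : ℕ → ℝ} (hw0 : ∀ v, 0 ≤ w v) (hw1 : ∑ v ∈ H.verts, w v = 1) :
    (r.factorial : ℝ) * ∑ e ∈ H.edges, ∏ v ∈ e, w v ≤ turanDensity r 𝓕 := by
  obtain ⟨v₀, hv₀⟩ : H.verts.Nonempty := nonempty_of_sum_ne_zero (hw1 ▸ one_ne_zero)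
  rw [mul_comm]
  refine le_of_tendsto_of_tendsto' (hH.tendsto_sum_prod_floor_div_choose hw0)
    tendsto_exNum_div_choose fun n => ?_
  have hsum : ((∑ v ∈ H.verts, ⌊w v * n⌋₊ : ℕ) : ℝ) ≤ n := by
    push_cast
    calc ∑ v ∈ H.verts, (⌊w v * n⌋₊ : ℝ) ≤ ∑ v ∈ H.verts, w v * n :=
          sum_le_sum fun v _ => Nat.floor_le (by have := hw0 v; positivity)
      _ = n := by rw [← sum_mul, hw1, one_mul]
  gcongr
  exact_mod_cast hfree.sum_prod_le_exNum_of_sum_le hH hv₀ (by exact_mod_cast hsum)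

theorem HomFree.blowupDensity_le_turanDensity (hH : H.IsUniform r) (hfree : H.HomFree 𝓕) :
    blowupDensity r H ≤ turanDensity r 𝓕 := by
  have hfac : (0 : ℝ) < r.factorial := by positivity
  rw [blowupDensity, ← le_div_iff₀' hfac, lagrangian]
  refine Real.sSup_le ?_ (div_nonneg turanDensity_nonneg hfac.le)
  rintro _ ⟨w, hw0, hw1, rfl⟩
  rw [le_div_iff₀' hfac]
  exact hfree.factorial_mul_sum_prod_le_turanDensity hH hw0 hw1

theorem _root_.List.two_le_length_of_headI_lt_sum {lam : List ℕ} (h : lam.headI < lam.sum) :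
    2 ≤ lam.length := by
  match lam, h with
  | [], h => simp at h
  | [_], h => simp at h
  | _ :: _ :: _, _ => simp

theorem _root_.IsGeneralTent.exists_apex {lam : List ℕ} (hF : IsGeneralTent r lam F)
    (hlen : 2 ≤ lam.length) :
    ∃ e : ℕ → Finset ℕ, F.edges = (range (lam.length + 1)).image e ∧
      (∀ i ∈ range (lam.length + 1), (e i).card = r) ∧ (e 0 ∩ e 1).card = lam.headI ∧
      e 0 = (Icc 1 lam.length).biUnion (fun i => e 0 ∩ e i) ∧
      ∃ v ∉ e 0, ∀ j ∈ Icc 1 lam.length, v ∈ e j := by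
  obtain ⟨e, -, hedges, -, hcard, hint, hcover, hdisj, v, hapex⟩ := hF
  have hv : ∀ j ∈ Icc 1 lam.length, v ∈ e j := by
    intro j hj
    obtain ⟨hj1, hjm⟩ := mem_Icc.1 hj
    rcases hj1.eq_or_lt with rfl | hj1
    · exact (mem_inter.1 ((hapex 1 2 le_rfl one_lt_two hlen).ge (mem_singleton_self v))).1
    · exact (mem_inter.1 ((hapex 1 j le_rfl hj1 hjm).ge (mem_singleton_self v))).2
  refine ⟨e, hedges, hcard, ?_, hcover, v, fun hv0 => ?_, hv⟩
  · rw [hint 1 le_rfl (by omega)]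
    cases lam <;> simp
  · exact disjoint_left.1 (hdisj 1 2 le_rfl one_lt_two hlen)
      (mem_inter.2 ⟨hv0, hv 1 (mem_Icc.2 ⟨le_rfl, by omega⟩)⟩)
      (mem_inter.2 ⟨hv0, hv 2 (mem_Icc.2 ⟨one_le_two, hlen⟩)⟩)

theorem _root_.IsGeneralTent.not_isHom {k : ℕ} {lam : List ℕ} (hF : IsGeneralTent r lam F)
    (hlen : 2 ≤ lam.length) (hk : k ≤ lam.headI) (hH : H.IsUniform r)
    (hsmall : ∀ e ∈ H.edges, ∀ e' ∈ H.edges, e ≠ e' → (e ∩ e').card < k) (f : ℕ → ℕ) :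
    ¬ IsHom f F H := by
  rintro ⟨-, hfe⟩
  obtain ⟨e, hedges, hcard, h01, hcover, v, hv0, hv⟩ := hF.exists_apex hlen
  have hmem (i : ℕ) (hi : i ≤ lam.length) : (e i).image f ∈ H.edges :=
    hfe _ (hedges ▸ mem_image_of_mem e (mem_range.2 (by omega)))
  have hinj (i : ℕ) (hi : i ≤ lam.length) : Set.InjOn f (e i) :=
    card_image_iff.1 ((hH _ (hmem i hi)).trans (hcard i (mem_range.2 (by omega))).symm)
  by_cases hf01 : (e 0).image f = (e 1).image f
  · have hfv : f v ∈ (e 0).image f :=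
      hf01 ▸ mem_image_of_mem f (hv 1 (mem_Icc.2 ⟨le_rfl, by omega⟩))
    obtain ⟨s, hs, hsv⟩ := mem_image.1 hfv
    obtain ⟨j, hj, hsj⟩ := mem_biUnion.1 (hcover ▸ hs)
    exact hv0 (hinj j (mem_Icc.1 hj).2 (mem_inter.1 hsj).2 (hv j hj) hsv ▸ hs)
  · have hlt := hsmall _ (hmem 0 (by omega)) _ (hmem 1 (by omega)) hf01
    have : lam.headI ≤ ((e 0).image f ∩ (e 1).image f).card := calc
      lam.headI = ((e 0 ∩ e 1).image f).card :=
        h01 ▸ (card_image_of_injOn ((hinj 0 (by omega)).mono inter_subset_left)).symm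
      _ ≤ _ := card_le_card (image_inter_subset _ _ _)
    omega

theorem _root_.LIntersecting.homFree {k : ℕ} {Lset : Set ℕ} (hHL : LIntersecting Lset H)
    (hL : ∀ l ∈ Lset, l + 1 ≤ k) (hH : H.IsUniform r)
    (h𝓕 : ∀ F ∈ 𝓕, ∃ lam : List ℕ, lam.sum = r ∧ lam.headI < r ∧ k ≤ lam.headI ∧
      IsGeneralTent r lam F) :
    H.HomFree 𝓕 := by
  intro F hF f
  obtain ⟨lam, hsum, hlt, hk, hF⟩ := h𝓕 F hF
  exact hF.not_isHom (List.two_le_length_of_headI_lt_sum (hsum ▸ hlt)) hk hH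
    (fun e he e' he' hne => hL _ (hHL e he e' he' hne)) f

end NatHypergraph

theorem LIntersecting_le_turan_general (r k : ℕ) (𝓕 : Set NatHypergraph)
    (h𝓕 : ∀ F ∈ 𝓕, ∃ lam : List ℕ, lam ≠ [] ∧ List.Pairwise (· ≥ ·) lam ∧
      (∀ a ∈ lam, 1 ≤ a) ∧ lam.sum = r ∧ lam.headI < r ∧ k ≤ lam.headI ∧
      IsGeneralTent r lam F)
    (Lset : Set ℕ) (hL : ∀ l ∈ Lset, l + 1 ≤ k)
    (H : NatHypergraph) (hH : H.IsUniform r) (hHL : LIntersecting Lset H) :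
    H.edges.card ≤ exNum r H.verts.card 𝓕 ∧ blowupDensity r H ≤ turanDensity r 𝓕 := by
  have hfree : H.HomFree 𝓕 := hHL.homFree hL hH fun F hF => by
    obtain ⟨lam, -, -, -, hsum, hlt, hk, hF⟩ := h𝓕 F hF
    exact ⟨lam, hsum, hlt, hk, hF⟩
  exact ⟨NatHypergraph.card_edges_le_exNum hH hfree.free, hfree.blowupDensity_le_turanDensity hH⟩

/-- **Lemma 6.2 (L-intersecting hypergraphs and tents).** Let `r ≥ 2`, `1 ≤ k ≤ r − 1`,
let `𝓕` be a family of `λ`-tents such that every member corresponds to a partition `λ`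
of `r` with `r > λ_1 ≥ k`, and let `Lset ⊆ {0, 1, …, k−1}`. Then every `Lset`-intersecting
`r`-uniform hypergraph `H` satisfies `|E(H)| ≤ ex(|V(H)|, 𝓕)` and `b(H) ≤ π(𝓕)`. -/
theorem LIntersecting_le_turan (r k : ℕ) (hr : 2 ≤ r) (hk1 : 1 ≤ k) (hk2 : k ≤ r - 1)
    (𝓕 : Set NatHypergraph)
    (h𝓕 : ∀ F ∈ 𝓕, ∃ lam : List ℕ, lam ≠ [] ∧ List.Pairwise (· ≥ ·) lam ∧
      (∀ a ∈ lam, 1 ≤ a) ∧ lam.sum = r ∧ lam.headI < r ∧ k ≤ lam.headI ∧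
      IsGeneralTent r lam F)
    (Lset : Set ℕ) (hL : ∀ l ∈ Lset, l + 1 ≤ k)
    (H : NatHypergraph) (hH : H.IsUniform r) (hHL : LIntersecting Lset H) :
    H.edges.card ≤ exNum r H.verts.card 𝓕 ∧ blowupDensity r H ≤ turanDensity r 𝓕 :=
  LIntersecting_le_turan_general r k 𝓕 h𝓕 Lset hL H hH hHL
end

section
/- Let X_1,…,X_n be discrete, finitely supported random variables taking values in a common set, and let a be a positive integer such that X_1,…,X_n have (a+1)-wise disjoint supports. Then there exist weights w_1,…,w_n ≥ 0 with ∑_{i=1}^n w_i = 1 such that the mixture Z of X_1,…,X_n with these weights satisfies ∑_{i=1}^n 2^{H(X_i)} ≤ a·2^{H(Z)}. -/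
open Finset

/-! Choose the weights `w_i ∝ 2^{H(X_i)}`. For any weights, splitting the mass of `Z` at each
point `x` among the at most `a` summands `w_i p_i(x)` and using concavity of `t ↦ -t log t` gives
`∑ w_i H(X_i) + H(w) ≤ H(Z) + log a`; for these particular weights the left-hand side equals
`log ∑ 2^{H(X_i)}` (the equality case of Gibbs' inequality). -/

open Real

lemma ent_eq_sum_negMulLog_div {α : Type*} (s : Finset α) (p : α → ℝ) :
    ent s p = (∑ x ∈ s, negMulLog (p x)) / log 2 := by
  simp only [ent, logb, negMulLog, Finset.sum_div]
  exact Finset.sum_congr rfl fun x _ => by ring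

lemma sum_negMulLog_le_negMulLog_sum_add_mul_log_card {ι : Type*} (t : Finset ι) {u : ι → ℝ}
    (hu : ∀ i ∈ t, 0 ≤ u i) :
    ∑ i ∈ t, negMulLog (u i) ≤ negMulLog (∑ i ∈ t, u i) + (∑ i ∈ t, u i) * log #t := by
  rcases t.eq_empty_or_nonempty with rfl | ht
  · simp
  have hm : (0 : ℝ) < #t := by exact_mod_cast ht.card_pos
  have jensen := concaveOn_negMulLog.le_map_sum (t := t) (w := fun _ => (#t : ℝ)⁻¹) (p := u)
    (fun _ _ => by positivity) (by simp [hm.ne']) hu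
  have scale : negMulLog ((#t : ℝ)⁻¹ * ∑ i ∈ t, u i) =
      (#t : ℝ)⁻¹ * (negMulLog (∑ i ∈ t, u i) + (∑ i ∈ t, u i) * log #t) := by
    rw [negMulLog_mul, negMulLog, log_inv]
    ring
  simp only [smul_eq_mul, ← Finset.mul_sum, scale] at jensen
  exact le_of_mul_le_mul_left jensen (inv_pos.2 hm)

lemma sum_negMulLog_le_of_card_support_le {ι : Type*} [Fintype ι] {u : ι → ℝ}
    (hu : ∀ i, 0 ≤ u i) {a : ℕ} (ha : #{i | u i ≠ 0} ≤ a) :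
    ∑ i, negMulLog (u i) ≤ negMulLog (∑ i, u i) + (∑ i, u i) * log a := by
  set t : Finset ι := {i | u i ≠ 0}
  have hsum : ∑ i ∈ t, u i = ∑ i, u i := Finset.sum_filter_ne_zero _
  have hsum_negMulLog : ∑ i ∈ t, negMulLog (u i) = ∑ i, negMulLog (u i) :=
    Finset.sum_subset (Finset.subset_univ t) fun i _ hi => by
      simp only [t, Finset.mem_filter, Finset.mem_univ, true_and, not_not] at hi
      simp [hi]
  rcases t.eq_empty_or_nonempty with ht | ht
  · rw [← hsum, ← hsum_negMulLog, ht]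
    simp
  have hlog : log #t ≤ log a := log_le_log (by exact_mod_cast ht.card_pos) (by exact_mod_cast ha)
  have hS : 0 ≤ ∑ i, u i := Finset.sum_nonneg fun i _ => hu i
  calc ∑ i, negMulLog (u i)
      ≤ negMulLog (∑ i, u i) + (∑ i, u i) * log #t := by
        rw [← hsum, ← hsum_negMulLog]
        exact sum_negMulLog_le_negMulLog_sum_add_mul_log_card t fun i _ => hu i
    _ ≤ negMulLog (∑ i, u i) + (∑ i, u i) * log a := by gcongr

theorem sum_mul_ent_add_ent_le_ent_mixture {α ι : Type*} [Fintype ι] (S : Finset α)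
    {p : ι → α → ℝ} (hp0 : ∀ i, ∀ x ∈ S, 0 ≤ p i x) (hpsum : ∀ i, ∑ x ∈ S, p i x = 1)
    {w : ι → ℝ} (hw0 : ∀ i, 0 ≤ w i) (hw1 : ∑ i, w i = 1)
    {a : ℕ} (hdisj : ∀ x ∈ S, #{i | p i x ≠ 0} ≤ a) :
    ∑ i, w i * ent S (p i) + ent univ w ≤ ent S (fun x => ∑ i, w i * p i x) + logb 2 a := by
  have hmass : ∑ x ∈ S, ∑ i, w i * p i x = 1 := by
    rw [Finset.sum_comm]
    simp only [← Finset.mul_sum, hpsum, mul_one, hw1]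
  have split : ∑ x ∈ S, ∑ i, negMulLog (w i * p i x) =
      ∑ i, w i * ∑ x ∈ S, negMulLog (p i x) + ∑ i, negMulLog (w i) := by
    rw [Finset.sum_comm, ← Finset.sum_add_distrib]
    refine Finset.sum_congr rfl fun i _ => ?_
    simp only [negMulLog_mul, Finset.sum_add_distrib, ← Finset.sum_mul, ← Finset.mul_sum, hpsum]
    ring
  have pointwise : ∑ x ∈ S, ∑ i, negMulLog (w i * p i x) ≤
      ∑ x ∈ S, negMulLog (∑ i, w i * p i x) + log a := by
    rw [← one_mul (log a), ← hmass, Finset.sum_mul, ← Finset.sum_add_distrib]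
    refine Finset.sum_le_sum fun x hx => sum_negMulLog_le_of_card_support_le
      (fun i => mul_nonneg (hw0 i) (hp0 i x hx)) ((Finset.card_le_card ?_).trans (hdisj x hx))
    intro i
    simp only [Finset.mem_filter, Finset.mem_univ, true_and]
    exact fun h hp => h (by rw [hp, mul_zero])
  simp only [ent_eq_sum_negMulLog_div, logb, mul_div_assoc', ← Finset.sum_div, ← add_div]
  exact div_le_div_of_nonneg_right (by linarith) (log_pos one_lt_two).le

section powWeights

variable {ι : Type*} [Fintype ι] (h : ι → ℝ)

noncomputable def powWeights (i : ι) : ℝ :=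
  2 ^ h i / ∑ j, (2 : ℝ) ^ h j

lemma sum_two_rpow_pos [Nonempty ι] : 0 < ∑ j, (2 : ℝ) ^ h j :=
  Finset.sum_pos (fun j _ => by positivity) Finset.univ_nonempty

lemma powWeights_nonneg (i : ι) : 0 ≤ powWeights h i := by
  unfold powWeights
  positivity

lemma sum_powWeights [Nonempty ι] : ∑ i, powWeights h i = 1 := by
  simp only [powWeights, ← Finset.sum_div, div_self (sum_two_rpow_pos h).ne']

lemma sum_mul_add_ent_powWeights [Nonempty ι] :
    ∑ i, powWeights h i * h i + ent univ (powWeights h) = logb 2 (∑ j, (2 : ℝ) ^ h j) := by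
  have hlogb : ∀ i, logb 2 (powWeights h i) = h i - logb 2 (∑ j, (2 : ℝ) ^ h j) := fun i => by
    rw [powWeights, logb_div (by positivity) (sum_two_rpow_pos h).ne',
      logb_rpow two_pos one_lt_two.ne']
  simp only [ent, hlogb, mul_sub, neg_sub, Finset.sum_sub_distrib, ← Finset.sum_mul,
    sum_powWeights, one_mul]
  ring

end powWeights

theorem mixture_bound_general {α : Type*} (n : ℕ) (hn : 1 ≤ n) (S : Finset α)
    (p : Fin n → α → ℝ) (hp0 : ∀ i x, 0 ≤ p i x)
    (hpsum : ∀ i, ∑ x ∈ S, p i x = 1)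
    (a : ℕ) (ha : 1 ≤ a)
    (hdisj : ∀ x : α, ∀ s : Finset (Fin n), (∀ i ∈ s, p i x ≠ 0) → s.card ≤ a) :
    ∃ w : Fin n → ℝ, (∀ i, 0 ≤ w i) ∧ (∑ i, w i) = 1 ∧
      (∑ i, (2 : ℝ) ^ ent S (p i)) ≤
        (a : ℝ) * (2 : ℝ) ^ ent S (fun x => ∑ i, w i * p i x) := by
  have : Nonempty (Fin n) := ⟨⟨0, hn⟩⟩
  set h : Fin n → ℝ := fun i => ent S (p i)
  refine ⟨powWeights h, powWeights_nonneg h, sum_powWeights h, ?_⟩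
  have key := (sum_mul_add_ent_powWeights h).symm.trans_le <|
    sum_mul_ent_add_ent_le_ent_mixture S (fun i x _ => hp0 i x) hpsum
      (powWeights_nonneg h) (sum_powWeights h)
      (fun x _ => hdisj x _ fun i hi => (Finset.mem_filter.1 hi).2)
  have ha0 : (0 : ℝ) < a := by exact_mod_cast ha
  rw [← sub_le_iff_le_add, ← logb_div (sum_two_rpow_pos h).ne' ha0.ne',
    logb_le_iff_le_rpow one_lt_two (div_pos (sum_two_rpow_pos h) ha0)] at key
  rwa [div_le_iff₀ ha0, mul_comm] at key

/-- **Lemma 2.4 (mixture bound).** Let `X_1, …, X_n` be finitely supported discrete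
random variables (given by their distributions `p i` on `S`) with `(a+1)`-wise disjoint
supports (no point is in the support of more than `a` of them). Then there is a mixture
`Z` of `X_1, …, X_n` (with weights `w`) such that `∑_i 2^{H(X_i)} ≤ a · 2^{H(Z)}`. -/
theorem mixture_bound {α : Type*} [DecidableEq α] (n : ℕ) (hn : 1 ≤ n) (S : Finset α)
    (p : Fin n → α → ℝ) (hp0 : ∀ i x, 0 ≤ p i x)
    (hpsum : ∀ i, ∑ x ∈ S, p i x = 1)
    (hsupp : ∀ i x, p i x ≠ 0 → x ∈ S)
    (a : ℕ) (ha : 1 ≤ a)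
    (hdisj : ∀ x : α, ∀ s : Finset (Fin n), (∀ i ∈ s, p i x ≠ 0) → s.card ≤ a) :
    ∃ w : Fin n → ℝ, (∀ i, 0 ≤ w i) ∧ (∑ i, w i) = 1 ∧
      (∑ i, (2 : ℝ) ^ ent S (p i)) ≤
        (a : ℝ) * (2 : ℝ) ^ ent S (fun x => ∑ i, w i * p i x) :=
  mixture_bound_general n hn S p hp0 hpsum a ha hdisj
end

section
/- For every r-uniform hypergraph H with at least one edge, the entropic density equals the blowup density: b_entropy(H) = b(H). -/
open Finset

/-!
Write `P(w) = ∑_{e ∈ E} ∏_{v ∈ e} w v`, so that `b(H) = r! · max P` over the simplex. Given a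
weighting `w`, let `Q_w` be the random edge that picks `e` with probability `∏_{v ∈ e} w v / P(w)`
and orders it uniformly, so each ordering of `e` has probability `∏_{v ∈ e} w v / (r! P(w))`.

If `X` is a random edge with marginal `m`, exchangeability turns the cross entropy of `X` against
`Q_m` into `log (r! P(m)) + r H(X_1)`, and Gibbs' inequality gives
`H(X) - r H(X_1) ≤ log (r! P(m)) ≤ log b(H)`. Conversely, at a maximiser `w` of `P` the
Karush–Kuhn–Tucker conditions `w v ∂_v P(w) = r P(w) w v` say precisely that `Q_w` has marginal
`w`, and then `Q_w` attains the bound.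
-/

namespace NatHypergraph

variable (H : NatHypergraph)

noncomputable def lagrangePoly (w : ℕ → ℝ) : ℝ := ∑ e ∈ H.edges, ∏ v ∈ e, w v

noncomputable def linkPoly (w : ℕ → ℝ) (v : ℕ) : ℝ :=
  ∑ e ∈ H.edges with v ∈ e, ∏ x ∈ e.erase v, w x

def weightSimplex : Set (ℕ → ℝ) := {w | (∀ v, 0 ≤ w v) ∧ ∑ v ∈ H.verts, w v = 1}

variable {H} {r : ℕ}

lemma IsUniform.verts_nonempty (hH : H.IsUniform r) (hr : 0 < r) (hne : H.edges.Nonempty) :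
    H.verts.Nonempty := by
  obtain ⟨e, he⟩ := hne
  obtain ⟨v, hv⟩ : e.Nonempty := card_pos.mp (by rw [hH e he]; omega)
  exact ⟨v, H.edge_sub e he hv⟩

lemma lagrangePoly_congr {u w : ℕ → ℝ} (h : ∀ v ∈ H.verts, u v = w v) :
    H.lagrangePoly u = H.lagrangePoly w :=
  sum_congr rfl fun e he => prod_congr rfl fun v hv => h v (H.edge_sub e he hv)

lemma lagrangePoly_pos {w : ℕ → ℝ} (hw : ∀ v, 0 ≤ w v) {e : Finset ℕ} (he : e ∈ H.edges)
    (hpos : ∀ v ∈ e, 0 < w v) : 0 < H.lagrangePoly w :=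
  (prod_pos hpos).trans_le <|
    single_le_sum (f := fun e => ∏ v ∈ e, w v) (fun _ _ => prod_nonneg fun v _ => hw v) he

lemma mul_linkPoly (w : ℕ → ℝ) (v : ℕ) :
    w v * H.linkPoly w v = ∑ e ∈ H.edges with v ∈ e, ∏ x ∈ e, w x := by
  rw [linkPoly, mul_sum]
  exact sum_congr rfl fun e he => mul_prod_erase e w (mem_filter.mp he).2

lemma sum_mul_linkPoly (hH : H.IsUniform r) (w : ℕ → ℝ) :
    ∑ v ∈ H.verts, w v * H.linkPoly w v = r * H.lagrangePoly w := by
  simp_rw [mul_linkPoly]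
  rw [sum_comm' (t' := H.edges) (s' := fun e => e), lagrangePoly, mul_sum]
  · exact sum_congr rfl fun e he => by rw [sum_const, hH e he, nsmul_eq_mul]
  · intro v e
    simp only [mem_filter]
    exact ⟨fun ⟨_, he, hv⟩ => ⟨hv, he⟩, fun ⟨hv, he⟩ => ⟨H.edge_sub e he hv, he, hv⟩⟩

lemma lagrangePoly_smul_add_smul_single (hH : H.IsUniform r) (w : ℕ → ℝ) (u : ℕ) (s : ℝ) :
    H.lagrangePoly ((1 - s) • w + s • Pi.single u 1 : ℕ → ℝ)
      = (1 - s) ^ r * H.lagrangePoly w + s * (1 - s) ^ (r - 1) * H.linkPoly w u := by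
  rw [lagrangePoly, lagrangePoly, linkPoly, mul_sum, mul_sum, sum_filter, ← sum_add_distrib]
  refine sum_congr rfl fun e he => ?_
  have hoff : ∀ x ∈ e.erase u, ((1 - s) • w + s • Pi.single u 1 : ℕ → ℝ) x = (1 - s) * w x := by
    intro x hx
    simp [(mem_erase.mp hx).1]
  split_ifs with hu
  · have hr : r = (e.erase u).card + 1 := by
      have := card_pos.mpr ⟨u, hu⟩
      rw [card_erase_of_mem hu, ← hH e he]
      omega
    rw [← mul_prod_erase e _ hu, ← mul_prod_erase e w hu, prod_congr rfl hoff, prod_mul_distrib,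
      prod_const, hr, Nat.add_sub_cancel]
    simp only [Pi.add_apply, Pi.smul_apply, smul_eq_mul, Pi.single_eq_same]
    ring
  · rw [prod_congr rfl fun x hx => (hoff x (mem_erase.mpr ⟨fun h => hu (h ▸ hx), hx⟩)),
      prod_mul_distrib, prod_const, hH e he]
    ring

lemma single_mem_weightSimplex {v : ℕ} (hv : v ∈ H.verts) : Pi.single v 1 ∈ H.weightSimplex := by
  refine ⟨fun x => ?_, ?_⟩
  · by_cases h : x = v <;> simp [h]
  · simp [Pi.single_apply, hv]

lemma smul_add_smul_single_mem_weightSimplex {w : ℕ → ℝ} (hw : w ∈ H.weightSimplex) {u : ℕ}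
    (hu : u ∈ H.verts) {s : ℝ} (hs : s ∈ Set.Icc (0 : ℝ) 1) :
    ((1 - s) • w + s • Pi.single u 1 : ℕ → ℝ) ∈ H.weightSimplex := by
  have hδ := single_mem_weightSimplex hu
  refine ⟨fun v => ?_, ?_⟩
  · simp only [Pi.add_apply, Pi.smul_apply, smul_eq_mul]
    exact add_nonneg (mul_nonneg (sub_nonneg.mpr hs.2) (hw.1 v)) (mul_nonneg hs.1 (hδ.1 v))
  · simp only [Pi.add_apply, Pi.smul_apply, smul_eq_mul, sum_add_distrib, ← mul_sum, hw.2, hδ.2]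
    ring

lemma exists_isMaxOn_lagrangePoly (hV : H.verts.Nonempty) :
    ∃ w ∈ H.weightSimplex, IsMaxOn H.lagrangePoly H.weightSimplex w := by
  set K : Set (ℕ → ℝ) := (Set.univ.pi fun v => if v ∈ H.verts then Set.Icc 0 1 else {0}) ∩
    {w | ∑ v ∈ H.verts, w v = 1}
  have hK : IsCompact K := by
    refine (isCompact_univ_pi fun v => ?_).inter_right
      (isClosed_eq (continuous_finsetSum _ fun v _ => continuous_apply v) continuous_const)
    split_ifs
    exacts [isCompact_Icc, isCompact_singleton]
  have hmemK : ∀ u ∈ H.weightSimplex, (fun v => if v ∈ H.verts then u v else 0) ∈ K := by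
    rintro u ⟨hu0, hu1⟩
    refine ⟨fun v _ => ?_, (sum_congr rfl fun v hv => if_pos hv).trans hu1⟩
    dsimp only
    split_ifs with hv
    · exact ⟨hu0 v, hu1 ▸ single_le_sum (fun x _ => hu0 x) hv⟩
    · rfl
  obtain ⟨v₀, hv₀⟩ := hV
  have hcont : Continuous H.lagrangePoly :=
    continuous_finsetSum _ fun e _ => continuous_finsetProd _ fun v _ => continuous_apply v
  obtain ⟨w, hwK, hmax⟩ :=
    hK.exists_isMaxOn ⟨_, hmemK _ (single_mem_weightSimplex hv₀)⟩ hcont.continuousOn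
  refine ⟨w, ⟨fun v => ?_, hwK.2⟩, fun u hu => ?_⟩
  · have := hwK.1 v (Set.mem_univ v)
    dsimp only at this
    split_ifs at this
    exacts [this.1, this.ge]
  · rw [Set.mem_ofPred_eq, lagrangePoly_congr fun v hv => (if_pos hv).symm]
    exact hmax (hmemK u hu)

lemma lagrangian_eq_of_isMaxOn {w : ℕ → ℝ} (hw : w ∈ H.weightSimplex)
    (hmax : IsMaxOn H.lagrangePoly H.weightSimplex w) : lagrangian H = H.lagrangePoly w :=
  IsGreatest.csSup_eq ⟨⟨w, hw.1, hw.2, rfl⟩, by rintro _ ⟨u, hu0, hu1, rfl⟩; exact hmax ⟨hu0, hu1⟩⟩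

/-- `φ s = P((1 - s) • w + s • δ_u)` is maximal on `[0, 1]` at `s = 0`, where
`φ' 0 = linkPoly w u - r P(w)`. -/
lemma linkPoly_le_of_isMaxOn (hH : H.IsUniform r) {w : ℕ → ℝ} (hw : w ∈ H.weightSimplex)
    (hmax : IsMaxOn H.lagrangePoly H.weightSimplex w) {u : ℕ} (hu : u ∈ H.verts) :
    H.linkPoly w u ≤ r * H.lagrangePoly w := by
  set P := H.lagrangePoly w
  set φ : ℝ → ℝ := fun s => (1 - s) ^ r * P + s * (1 - s) ^ (r - 1) * H.linkPoly w u
  have hφ : HasDerivAt φ (H.linkPoly w u - r * P) 0 := by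
    have h1 : HasDerivAt (fun s : ℝ => 1 - s) (-1) 0 := (hasDerivAt_id 0).const_sub 1
    exact (((h1.pow r).mul_const P).add
      (((hasDerivAt_id 0).mul (h1.pow (r - 1))).mul_const _)).congr_deriv (by simp; ring)
  have hslope : ∀ s ∈ Set.Ioo (0 : ℝ) 1, s⁻¹ • (φ (0 + s) - φ 0) ≤ 0 := by
    intro s hs
    have hle := hmax (smul_add_smul_single_mem_weightSimplex hw hu (Set.Ioo_subset_Icc_self hs))
    rw [Set.mem_ofPred_eq, lagrangePoly_smul_add_smul_single hH] at hle
    simp only [φ, zero_add, smul_eq_mul]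
    exact mul_nonpos_of_nonneg_of_nonpos (inv_nonneg.mpr hs.1.le) (by simpa using hle)
  have := le_of_tendsto hφ.tendsto_slope_zero_right
    (Filter.eventually_of_mem (Ioo_mem_nhdsGT one_pos) hslope)
  linarith

lemma mul_linkPoly_eq_of_isMaxOn (hH : H.IsUniform r) {w : ℕ → ℝ} (hw : w ∈ H.weightSimplex)
    (hmax : IsMaxOn H.lagrangePoly H.weightSimplex w) {v : ℕ} (hv : v ∈ H.verts) :
    w v * H.linkPoly w v = r * H.lagrangePoly w * w v := by
  have hsum : ∑ x ∈ H.verts, w x * (r * H.lagrangePoly w - H.linkPoly w x) = 0 := by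
    simp only [mul_sub, sum_sub_distrib]
    rw [sum_mul_linkPoly hH, ← sum_mul, hw.2]
    ring
  have := (sum_eq_zero_iff_of_nonneg fun x hx =>
    mul_nonneg (hw.1 x) (sub_nonneg.mpr (linkPoly_le_of_isMaxOn hH hw hmax hx))).mp hsum v hv
  linarith

lemma lagrangePoly_pos_of_isMaxOn (hr : 0 < r) (hH : H.IsUniform r) (hne : H.edges.Nonempty)
    {w : ℕ → ℝ} (hmax : IsMaxOn H.lagrangePoly H.weightSimplex w) : 0 < H.lagrangePoly w := by
  obtain ⟨e, he⟩ := hne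
  set u : ℕ → ℝ := fun x => if x ∈ e then (r : ℝ)⁻¹ else 0
  have hu : u ∈ H.weightSimplex := by
    refine ⟨fun x => by simp only [u]; split_ifs <;> positivity, ?_⟩
    rw [← sum_subset (H.edge_sub e he) fun x _ hx => if_neg hx, sum_congr rfl fun x hx => if_pos hx,
      sum_const, hH e he, nsmul_eq_mul, mul_inv_cancel₀ (by positivity)]
  exact (lagrangePoly_pos hu.1 he fun x hx => by simp [u, hx, hr]).trans_le (hmax hu)

end NatHypergraph

section Tuples

variable {r : ℕ} {H : NatHypergraph}

lemma mem_tupleSpace {t : Fin r → ℕ} : t ∈ tupleSpace r H ↔ ∀ i, t i ∈ H.verts :=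
  Fintype.mem_piFinset

lemma mem_tupleSpace_of_image_mem_edges {t : Fin r → ℕ} (ht : image t univ ∈ H.edges) :
    t ∈ tupleSpace r H :=
  mem_tupleSpace.mpr fun i => H.edge_sub _ ht (mem_image_of_mem t (mem_univ i))

lemma injective_of_card_image_univ {t : Fin r → ℕ} (ht : #(image t univ) = r) :
    Function.Injective t := by
  rw [← Set.injOn_univ, ← coe_univ]
  exact card_image_iff.mp (by rw [ht, card_univ, Fintype.card_fin])

lemma injective_of_image_mem_edges (hH : H.IsUniform r) {t : Fin r → ℕ}
    (ht : image t univ ∈ H.edges) : Function.Injective t :=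
  injective_of_card_image_univ (hH _ ht)

/-- The tuples listing an `r`-set `e` are the embeddings `Fin r ↪ e`. -/
lemma card_filter_image_eq {e : Finset ℕ} (he : e ⊆ H.verts) (hcard : #e = r) :
    #{t ∈ tupleSpace r H | image t univ = e} = r.factorial := by
  set Φ : (Fin r ↪ e) → Fin r → ℕ := fun g i => g i
  have hΦ : Function.Injective Φ := fun g g' h =>
    DFunLike.ext _ _ fun i => Subtype.ext (congrFun h i)
  have himage : {t ∈ tupleSpace r H | image t univ = e} = univ.image Φ := by
    ext t
    simp only [mem_filter, mem_image, mem_univ, true_and]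
    constructor
    · rintro ⟨-, rfl⟩
      exact ⟨⟨fun i => ⟨t i, mem_image_of_mem t (mem_univ i)⟩, fun a b h =>
        injective_of_card_image_univ hcard (congrArg Subtype.val h)⟩, rfl⟩
    · rintro ⟨g, rfl⟩
      have hsub : image (Φ g) univ ⊆ e := fun x hx => by
        obtain ⟨i, -, rfl⟩ := mem_image.mp hx
        exact (g i).2
      refine ⟨mem_tupleSpace.mpr fun i => he (g i).2, eq_of_subset_of_card_le hsub ?_⟩
      rw [card_image_of_injective _ fun a b h => g.injective (Subtype.ext h), card_univ,
        Fintype.card_fin, hcard]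
  rw [himage, card_image_of_injective _ hΦ, card_univ, Fintype.card_embedding_eq,
    Fintype.card_coe, Fintype.card_fin, hcard, Nat.descFactorial_self]

lemma sum_tupleSpace_image_mem_edges (hH : H.IsUniform r) (G : Finset ℕ → ℝ) :
    ∑ t ∈ tupleSpace r H with image t univ ∈ H.edges, G (image t univ)
      = r.factorial * ∑ e ∈ H.edges, G e := by
  rw [← sum_fiberwise_of_maps_to (g := fun t => image t univ) (t := H.edges)
    fun t ht => (mem_filter.mp ht).2, mul_sum]
  refine sum_congr rfl fun e he => ?_
  have hfiber : {t ∈ {t ∈ tupleSpace r H | image t univ ∈ H.edges} | image t univ = e}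
      = {t ∈ tupleSpace r H | image t univ = e} := by
    rw [filter_filter]
    exact filter_congr fun t _ => ⟨And.right, fun h => ⟨h ▸ he, h⟩⟩
  rw [hfiber, sum_congr rfl fun t ht => by rw [(mem_filter.mp ht).2], sum_const,
    card_filter_image_eq (H.edge_sub e he) (hH e he), nsmul_eq_mul]

lemma sum_tupleSpace_comp_perm (σ : Equiv.Perm (Fin r)) (F : (Fin r → ℕ) → ℝ) :
    ∑ t ∈ tupleSpace r H, F (t ∘ σ) = ∑ t ∈ tupleSpace r H, F t :=
  sum_nbij' (· ∘ σ) (· ∘ σ.symm) (fun t ht => mem_tupleSpace.mpr fun i => mem_tupleSpace.mp ht _)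
    (fun t ht => mem_tupleSpace.mpr fun i => mem_tupleSpace.mp ht _)
    (fun t _ => by ext; simp) (fun t _ => by ext; simp) fun _ _ => rfl

noncomputable def marginal (r : ℕ) (H : NatHypergraph) (p : (Fin r → ℕ) → ℝ) (j : Fin r)
    (v : ℕ) : ℝ :=
  ∑ t ∈ tupleSpace r H with t j = v, p t

variable {p : (Fin r → ℕ) → ℝ}

lemma coordEnt_eq_ent_marginal (j : Fin r) : coordEnt r H p j = ent H.verts (marginal r H p j) := by
  rw [coordEnt, pushEnt, tupleSpace, Fintype.eval_image_piFinset_const]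
  rfl

lemma marginal_mem_weightSimplex (hp0 : ∀ t, 0 ≤ p t) (hp1 : ∑ t ∈ tupleSpace r H, p t = 1)
    (j : Fin r) : marginal r H p j ∈ H.weightSimplex :=
  ⟨fun _ => sum_nonneg fun t _ => hp0 t,
    (sum_fiberwise_of_maps_to (fun _ ht => mem_tupleSpace.mp ht j) p).trans hp1⟩

lemma le_marginal (hperm : ∀ σ : Equiv.Perm (Fin r), ∀ t, p (t ∘ σ) = p t) (hp0 : ∀ t, 0 ≤ p t)
    {t : Fin r → ℕ} (ht : t ∈ tupleSpace r H) (i j : Fin r) : p t ≤ marginal r H p j (t i) := by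
  rw [← hperm (Equiv.swap j i) t]
  refine single_le_sum (f := p) (fun s _ => hp0 s) (mem_filter.mpr ⟨?_, by simp⟩)
  exact mem_tupleSpace.mpr fun k => mem_tupleSpace.mp ht _

lemma sum_mul_apply_eq_sum_marginal (hperm : ∀ σ : Equiv.Perm (Fin r), ∀ t, p (t ∘ σ) = p t)
    (f : ℕ → ℝ) (i j : Fin r) :
    ∑ t ∈ tupleSpace r H, p t * f (t i) = ∑ v ∈ H.verts, marginal r H p j v * f v := by
  have hswap : ∑ t ∈ tupleSpace r H, p t * f (t i) = ∑ t ∈ tupleSpace r H, p t * f (t j) := by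
    rw [← sum_tupleSpace_comp_perm (Equiv.swap j i)]
    exact sum_congr rfl fun t _ => by simp [hperm]
  rw [hswap, ← sum_fiberwise_of_maps_to (fun t ht => mem_tupleSpace.mp ht j)]
  refine sum_congr rfl fun v _ => ?_
  rw [marginal, sum_mul]
  exact sum_congr rfl fun t ht => by rw [(mem_filter.mp ht).2]

lemma sum_mul_sum_image_eq_sum_marginal
    (hperm : ∀ σ : Equiv.Perm (Fin r), ∀ t, p (t ∘ σ) = p t)
    (hinj : ∀ t, p t ≠ 0 → Function.Injective t) (f : ℕ → ℝ) (j : Fin r) :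
    ∑ t ∈ tupleSpace r H, p t * ∑ x ∈ image t univ, f x
      = r * ∑ v ∈ H.verts, marginal r H p j v * f v := by
  have hterm : ∀ t, p t * ∑ x ∈ image t univ, f x = ∑ i, p t * f (t i) := by
    intro t
    by_cases ht : p t = 0
    · simp [ht]
    · rw [sum_image fun a _ b _ h => hinj t ht h, mul_sum]
  simp_rw [hterm]
  rw [sum_comm, sum_congr rfl fun i _ => sum_mul_apply_eq_sum_marginal hperm f i j, sum_const,
    card_univ, Fintype.card_fin, nsmul_eq_mul]

end Tuples

noncomputable def crossEnt {α : Type*} (s : Finset α) (p q : α → ℝ) : ℝ :=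
  ∑ a ∈ s, -(p a * Real.logb 2 (q a))

lemma ent_eq_crossEnt {α : Type*} (s : Finset α) (p : α → ℝ) : ent s p = crossEnt s p p := rfl

lemma ent_le_crossEnt {α : Type*} {s : Finset α} {p q : α → ℝ} (hp : ∀ a ∈ s, 0 ≤ p a)
    (hq : ∀ a ∈ s, 0 ≤ q a) (hsum : ∑ a ∈ s, q a ≤ ∑ a ∈ s, p a)
    (hpq : ∀ a ∈ s, 0 < p a → 0 < q a) : ent s p ≤ crossEnt s p q := by
  have hterm : ∀ a ∈ s, p a * (Real.log (q a) - Real.log (p a)) ≤ q a - p a := by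
    intro a ha
    rcases (hp a ha).eq_or_lt with h | h
    · simp [← h, hq a ha]
    · have hlog := Real.log_le_sub_one_of_pos (div_pos (hpq a ha h) h)
      rw [Real.log_div (hpq a ha h).ne' h.ne'] at hlog
      calc _ ≤ p a * (q a / p a - 1) := mul_le_mul_of_nonneg_left hlog h.le
        _ = q a - p a := by field_simp
  have hgibbs : ∑ a ∈ s, p a * (Real.log (q a) - Real.log (p a)) ≤ 0 :=
    (sum_le_sum hterm).trans (by rw [sum_sub_distrib]; linarith)
  have hdiff : crossEnt s p q - ent s p
      = -(∑ a ∈ s, p a * (Real.log (q a) - Real.log (p a))) / Real.log 2 := by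
    rw [crossEnt, ent, ← sum_sub_distrib, neg_div, sum_div, ← sum_neg_distrib]
    refine sum_congr rfl fun a _ => ?_
    simp only [Real.logb]
    ring
  have := div_nonneg (neg_nonneg.mpr hgibbs) (Real.log_nonneg one_le_two)
  linarith

section WeightedEdge

variable {r : ℕ} {H : NatHypergraph} {w : ℕ → ℝ}

noncomputable def weightedEdgeDistrib (r : ℕ) (H : NatHypergraph) (w : ℕ → ℝ) (t : Fin r → ℕ) :
    ℝ :=
  if image t univ ∈ H.edges then (∏ x ∈ image t univ, w x) / (r.factorial * H.lagrangePoly w)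
  else 0

lemma sum_weightedEdgeDistrib_mul (hH : H.IsUniform r) (F : Finset ℕ → ℝ) :
    ∑ t ∈ tupleSpace r H, weightedEdgeDistrib r H w t * F (image t univ)
      = (∑ e ∈ H.edges, (∏ x ∈ e, w x) * F e) / H.lagrangePoly w := by
  simp_rw [weightedEdgeDistrib, ite_mul, zero_mul]
  rw [← sum_filter, sum_tupleSpace_image_mem_edges hH fun e => (∏ x ∈ e, w x) / _ * F e, mul_sum,
    sum_div]
  refine sum_congr rfl fun e _ => ?_
  have : (r.factorial : ℝ) ≠ 0 := by positivity
  field_simp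

lemma weightedEdgeDistrib_comp_perm (σ : Equiv.Perm (Fin r)) (t : Fin r → ℕ) :
    weightedEdgeDistrib r H w (t ∘ σ) = weightedEdgeDistrib r H w t := by
  rw [weightedEdgeDistrib, weightedEdgeDistrib, ← image_image, image_univ_equiv]

lemma isRandomEdge_weightedEdgeDistrib (hH : H.IsUniform r) (hw : ∀ v, 0 ≤ w v)
    (hP : 0 < H.lagrangePoly w) : IsRandomEdge r H (weightedEdgeDistrib r H w) := by
  refine ⟨fun t => ?_, ?_, fun t ht => ?_, weightedEdgeDistrib_comp_perm⟩
  · rw [weightedEdgeDistrib]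
    split_ifs
    exacts [div_nonneg (prod_nonneg fun x _ => hw x) (by positivity), le_rfl]
  · have := sum_weightedEdgeDistrib_mul (w := w) hH fun _ => 1
    simp only [mul_one] at this
    exact this.trans (div_self hP.ne')
  · by_contra h
    exact ht (if_neg h)

lemma marginal_weightedEdgeDistrib (hH : H.IsUniform r) {v : ℕ} (hv : v ∈ H.verts) (j : Fin r) :
    marginal r H (weightedEdgeDistrib r H w) j v
      = w v * H.linkPoly w v / (r * H.lagrangePoly w) := by
  have hinj : ∀ t, weightedEdgeDistrib r H w t ≠ 0 → Function.Injective t := fun t ht =>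
    injective_of_image_mem_edges hH (by by_contra h; exact ht (if_neg h))
  have key := sum_mul_sum_image_eq_sum_marginal (H := H) weightedEdgeDistrib_comp_perm hinj
    (fun x => if x = v then 1 else 0) j
  simp only [sum_ite_eq'] at key
  rw [sum_weightedEdgeDistrib_mul hH fun e => if v ∈ e then 1 else 0] at key
  simp only [mul_ite, mul_one, mul_zero, sum_ite_eq', if_pos hv] at key
  rw [← sum_filter, ← NatHypergraph.mul_linkPoly] at key
  have : (r : ℝ) ≠ 0 := Nat.cast_ne_zero.mpr j.pos.ne'
  field_simp
  linarith

lemma crossEnt_weightedEdgeDistrib (hH : H.IsUniform r) {p : (Fin r → ℕ) → ℝ}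
    (hperm : ∀ σ : Equiv.Perm (Fin r), ∀ t, p (t ∘ σ) = p t)
    (hp1 : ∑ t ∈ tupleSpace r H, p t = 1)
    (hsupp : ∀ t, p t ≠ 0 → image t univ ∈ H.edges ∧ ∀ x ∈ image t univ, w x ≠ 0)
    (hP : 0 < H.lagrangePoly w) (j : Fin r) :
    crossEnt (tupleSpace r H) p (weightedEdgeDistrib r H w)
      = Real.logb 2 (r.factorial * H.lagrangePoly w)
        - r * ∑ v ∈ H.verts, marginal r H p j v * Real.logb 2 (w v) := by
  have hZ : (r.factorial : ℝ) * H.lagrangePoly w ≠ 0 := by positivity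
  have hterm : ∀ t, -(p t * Real.logb 2 (weightedEdgeDistrib r H w t))
      = p t * Real.logb 2 (r.factorial * H.lagrangePoly w)
        - p t * ∑ x ∈ image t univ, Real.logb 2 (w x) := by
    intro t
    by_cases ht : p t = 0
    · simp [ht]
    obtain ⟨he, hw⟩ := hsupp t ht
    rw [weightedEdgeDistrib, if_pos he, Real.logb_div (prod_ne_zero_iff.mpr hw) hZ,
      Real.logb_prod _ _ hw]
    ring
  have hinj : ∀ t, p t ≠ 0 → Function.Injective t := fun t ht =>
    injective_of_image_mem_edges hH (hsupp t ht).1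
  rw [crossEnt, sum_congr rfl fun t _ => hterm t, sum_sub_distrib, ← sum_mul, hp1, one_mul,
    sum_mul_sum_image_eq_sum_marginal hperm hinj _ j]

end WeightedEdge

section Density

variable {r : ℕ} {H : NatHypergraph}

lemma two_rpow_jointEnt_sub_mul_coordEnt_le (hH : H.IsUniform r) {p : (Fin r → ℕ) → ℝ}
    (hp : IsRandomEdge r H p) (j : Fin r) :
    (2 : ℝ) ^ (jointEnt r H p - r * coordEnt r H p j)
      ≤ r.factorial * H.lagrangePoly (marginal r H p j) := by
  obtain ⟨hp0, hp1, hpe, hperm⟩ := hp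
  set m := marginal r H p j
  have hm := marginal_mem_weightSimplex hp0 hp1 j
  have hsupp : ∀ t, p t ≠ 0 → image t univ ∈ H.edges ∧ ∀ x ∈ image t univ, 0 < m x := by
    intro t ht
    refine ⟨hpe t ht, fun x hx => ?_⟩
    obtain ⟨i, -, rfl⟩ := mem_image.mp hx
    exact ((hp0 t).lt_of_ne' ht).trans_le
      (le_marginal hperm hp0 (mem_tupleSpace_of_image_mem_edges (hpe t ht)) i j)
  obtain ⟨t, -, ht⟩ : ∃ t ∈ tupleSpace r H, p t ≠ 0 :=
    exists_ne_zero_of_sum_ne_zero (by rw [hp1]; exact one_ne_zero)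
  have hP : 0 < H.lagrangePoly m :=
    NatHypergraph.lagrangePoly_pos hm.1 (hsupp t ht).1 (hsupp t ht).2
  have hq := isRandomEdge_weightedEdgeDistrib hH hm.1 hP
  have hgibbs : jointEnt r H p ≤ crossEnt (tupleSpace r H) p (weightedEdgeDistrib r H m) := by
    refine ent_le_crossEnt (fun t _ => hp0 t) (fun t _ => hq.1 t) (by rw [hq.2.1, hp1])
      fun t _ hpt => ?_
    obtain ⟨he, hpos⟩ := hsupp t hpt.ne'
    rw [weightedEdgeDistrib, if_pos he]
    exact div_pos (prod_pos hpos) (by positivity)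
  rw [crossEnt_weightedEdgeDistrib hH hperm hp1
    (fun t ht => ⟨(hsupp t ht).1, fun x hx => ((hsupp t ht).2 x hx).ne'⟩) hP j] at hgibbs
  rw [← Real.rpow_logb two_pos (by norm_num) (by positivity : 0 < r.factorial * H.lagrangePoly m)]
  refine Real.rpow_le_rpow_of_exponent_le one_le_two ?_
  rw [coordEnt_eq_ent_marginal, ent, sum_neg_distrib]
  linarith

lemma two_rpow_jointEnt_sub_mul_coordEnt_weightedEdgeDistrib (hH : H.IsUniform r) {w : ℕ → ℝ}
    (hw : w ∈ H.weightSimplex) (hmax : IsMaxOn H.lagrangePoly H.weightSimplex w)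
    (hP : 0 < H.lagrangePoly w) (j : Fin r) :
    (2 : ℝ) ^ (jointEnt r H (weightedEdgeDistrib r H w)
        - r * coordEnt r H (weightedEdgeDistrib r H w) j)
      = r.factorial * H.lagrangePoly w := by
  have hq := isRandomEdge_weightedEdgeDistrib hH hw.1 hP
  have hr : (r : ℝ) ≠ 0 := Nat.cast_ne_zero.mpr j.pos.ne'
  have hmarg : ∀ v ∈ H.verts, marginal r H (weightedEdgeDistrib r H w) j v = w v := by
    intro v hv
    rw [marginal_weightedEdgeDistrib hH hv, NatHypergraph.mul_linkPoly_eq_of_isMaxOn hH hw hmax hv]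
    field_simp
  have hsupp : ∀ t, weightedEdgeDistrib r H w t ≠ 0 →
      image t univ ∈ H.edges ∧ ∀ x ∈ image t univ, w x ≠ 0 := by
    intro t ht
    have he : image t univ ∈ H.edges := by by_contra h; exact ht (if_neg h)
    refine ⟨he, prod_ne_zero_iff.mp fun h => ht ?_⟩
    rw [weightedEdgeDistrib, if_pos he, h, zero_div]
  have hjoint : jointEnt r H (weightedEdgeDistrib r H w)
      = Real.logb 2 (r.factorial * H.lagrangePoly w)
        - r * ∑ v ∈ H.verts, w v * Real.logb 2 (w v) := by
    rw [jointEnt, ent_eq_crossEnt, crossEnt_weightedEdgeDistrib hH hq.2.2.2 hq.2.1 hsupp hP j]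
    exact congrArg _ (congrArg _ (sum_congr rfl fun v hv => by rw [hmarg v hv]))
  have hcoord : coordEnt r H (weightedEdgeDistrib r H w) j
      = -∑ v ∈ H.verts, w v * Real.logb 2 (w v) := by
    rw [coordEnt_eq_ent_marginal, ent, ← sum_neg_distrib]
    exact sum_congr rfl fun v hv => by rw [hmarg v hv]
  rw [hjoint, hcoord, mul_neg, sub_neg_eq_add, sub_add_cancel,
    Real.rpow_logb two_pos (by norm_num) (by positivity)]

end Density

/-- **Proposition 2.9 (entropic density equals blowup density).** For every `r`-uniform
hypergraph `H` with at least one edge, the blowup density `b(H)` is the maximum of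
`2^{H(X_1, …, X_r) − r · H(X_1)}` over all random edges `(X_1, …, X_r)` with uniform
ordering on `H`; that is, `b_entropy(H) = b(H)`. -/
theorem entropic_density_eq_blowupDensity (r : ℕ) (hr : 1 ≤ r) (H : NatHypergraph)
    (hH : H.IsUniform r) (hne : H.edges.Nonempty) :
    IsGreatest {d : ℝ | ∃ p : (Fin r → ℕ) → ℝ, IsRandomEdge r H p ∧
        d = (2 : ℝ) ^ (jointEnt r H p - r * coordEnt r H p ⟨0, by omega⟩)}
      (blowupDensity r H) := by
  obtain ⟨w, hw, hmax⟩ := NatHypergraph.exists_isMaxOn_lagrangePoly (hH.verts_nonempty hr hne)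
  have hP := NatHypergraph.lagrangePoly_pos_of_isMaxOn hr hH hne hmax
  rw [blowupDensity, NatHypergraph.lagrangian_eq_of_isMaxOn hw hmax]
  refine ⟨⟨weightedEdgeDistrib r H w, isRandomEdge_weightedEdgeDistrib hH hw.1 hP,
    (two_rpow_jointEnt_sub_mul_coordEnt_weightedEdgeDistrib hH hw hmax hP _).symm⟩, ?_⟩
  rintro _ ⟨p, hp, rfl⟩
  refine (two_rpow_jointEnt_sub_mul_coordEnt_le hH hp _).trans ?_
  gcongr
  exact hmax (marginal_mem_weightSimplex hp.1 hp.2.1 _)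
end
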